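/- arXiv:math/0703696 — 7 statements merged into one kernel-verified Lean document; each statement's English description precedes it below -/
import Mathlib

section
/- For all positive integers $d,\delta$ and all integers $m\ge n\ge 1$, $\mathbf P\{d\mid B_n\text{ and }\delta\mid B_m\} = \frac{1}{d\delta}\sum_{j=0}^{d-1}\sum_{h=0}^{\delta-1} e^{i\pi(\frac{j}{d}n+\frac{h}{\delta}m)}\,\cos^{n}\!\big(\pi(\tfrac{j}{d}+\tfrac{h}{\delta})\big)\,\cos^{m-n}\!\big(\tfrac{\pi h}{\delta}\big)$. -/
/-!
Filtering by roots of unity, `1_{d ∣ a} = d⁻¹ ∑_{j<d} ζ_d^{j a}`, turns the probability into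
an average of the joint moments `E[u ^ B_n * v ^ B_m]` over `d`-th roots `u` and `δ`-th roots
`v`. By independence such a moment factors over the bits as
`((1 + u v) / 2) ^ n * ((1 + v) / 2) ^ (m - n)`, and `e^{iπx} cos (πx) = (1 + e^{2πix}) / 2`
turns each factor into the cosine form.
-/

open MeasureTheory ProbabilityTheory Finset Real

theorem IsPrimitiveRoot.sum_range_pow_pow_eq_ite {R : Type*} [CommRing R] [IsDomain R]
    {ζ : R} {k : ℕ} (hζ : IsPrimitiveRoot ζ k) (a : ℕ) :
    ∑ j ∈ range k, (ζ ^ j) ^ a = if k ∣ a then (k : R) else 0 := by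
  rw [sum_congr rfl fun j _ => pow_right_comm ζ j a]
  split_ifs with hka
  · simp [(hζ.pow_eq_one_iff_dvd a).mpr hka]
  · have hne : ζ ^ a - 1 ≠ 0 := sub_ne_zero.mpr fun h => hka ((hζ.pow_eq_one_iff_dvd a).mp h)
    have hgeom := mul_geom_sum (ζ ^ a) k
    rw [pow_right_comm, hζ.pow_eq_one, one_pow, sub_self] at hgeom
    exact (mul_eq_zero.mp hgeom).resolve_left hne

theorem Complex.exp_mul_I_mul_cos (z : ℂ) :
    Complex.exp (z * Complex.I) * Complex.cos z = (1 + Complex.exp (2 * z * Complex.I)) / 2 := by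
  rw [Complex.cos, mul_div_assoc', mul_add, ← Complex.exp_add, ← Complex.exp_add]
  ring_nf
  simp only [Complex.exp_zero]
  ring

theorem exp_mul_cos_pow_mul_cos_pow (x y : ℝ) {n m : ℕ} (hnm : n ≤ m) :
    Complex.exp (Complex.I * π * (x * n + y * m)) * (Real.cos (π * (x + y)) : ℂ) ^ n
        * (Real.cos (π * y) : ℂ) ^ (m - n)
      = ((1 + Complex.exp (2 * π * Complex.I * x) * Complex.exp (2 * π * Complex.I * y)) / 2) ^ n
        * ((1 + Complex.exp (2 * π * Complex.I * y)) / 2) ^ (m - n) := by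
  have harg : Complex.I * π * (x * n + y * m)
      = n * (((π * (x + y) : ℝ) : ℂ) * Complex.I)
        + (m - n : ℕ) * (((π * y : ℝ) : ℂ) * Complex.I) := by
    push_cast [Nat.cast_sub hnm]
    ring
  rw [harg, Complex.exp_add, Complex.exp_nat_mul, Complex.exp_nat_mul, Complex.ofReal_cos,
    Complex.ofReal_cos, show ∀ a c e f : ℂ, a ^ n * c ^ (m - n) * e ^ n * f ^ (m - n)
      = (a * e) ^ n * (c * f) ^ (m - n) from fun _ _ _ _ => by ring, Complex.exp_mul_I_mul_cos,
    Complex.exp_mul_I_mul_cos, ← Complex.exp_add]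
  push_cast
  ring_nf

section
variable {Ω : Type*} [MeasurableSpace Ω] {P : Measure Ω}

theorem ProbabilityTheory.iIndepFun.integral_finset_prod_comp {𝕜 ι 𝓧 : Type*} [RCLike 𝕜]
    [MeasurableSpace 𝓧] {X : ι → Ω → 𝓧} {f : ι → 𝓧 → 𝕜} (hX : iIndepFun X P)
    (mX : ∀ i, AEMeasurable (X i) P)
    (hf : ∀ i, AEStronglyMeasurable (f i) (P.map (X i))) (s : Finset ι) :
    ∫ ω, ∏ i ∈ s, f i (X i ω) ∂P = ∏ i ∈ s, ∫ ω, f i (X i ω) ∂P := by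
  simp only [← prod_coe_sort s]
  exact (hX.precomp Subtype.val_injective).integral_fun_prod_comp (fun i => mX i) (fun i => hf i)

theorem measureReal_dvd_and_dvd_eq_sum_integral [IsFiniteMeasure P] {Y Z : Ω → ℕ}
    (hY : Measurable Y) (hZ : Measurable Z) {ζ ξ : ℂ} {d δ : ℕ} (hζ : IsPrimitiveRoot ζ d)
    (hξ : IsPrimitiveRoot ξ δ) (hd : d ≠ 0) (hδ : δ ≠ 0) :
    (P.real {ω | d ∣ Y ω ∧ δ ∣ Z ω} : ℂ) = 1 / (d * δ) *
      ∑ j ∈ range d, ∑ h ∈ range δ, ∫ ω, (ζ ^ j) ^ Y ω * (ξ ^ h) ^ Z ω ∂P := by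
  have ite_dvd_eq {η : ℂ} {k : ℕ} (hη : IsPrimitiveRoot η k) (hk : k ≠ 0) (a : ℕ) :
      (if k ∣ a then 1 else 0 : ℂ) = 1 / k * ∑ j ∈ range k, (η ^ j) ^ a := by
    rw [hη.sum_range_pow_pow_eq_ite]
    split_ifs <;> simp [hk]
  have hint (j h : ℕ) : Integrable (fun ω => (ζ ^ j) ^ Y ω * (ξ ^ h) ^ Z ω) P := by
    have hmeas : Measurable fun ω => (ζ ^ j) ^ Y ω * (ξ ^ h) ^ Z ω :=
      (measurable_from_nat.comp hY).mul (measurable_from_nat.comp hZ)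
    refine .of_bound hmeas.aestronglyMeasurable 1 (.of_forall fun ω => ?_)
    simp [hζ.norm'_eq_one hd, hξ.norm'_eq_one hδ]
  have hE : MeasurableSet {ω | d ∣ Y ω ∧ δ ∣ Z ω} :=
    (hY (.of_discrete (s := {a | d ∣ a}))).inter (hZ (.of_discrete (s := {a | δ ∣ a})))
  calc (P.real {ω | d ∣ Y ω ∧ δ ∣ Z ω} : ℂ)
      = ∫ ω, {ω | d ∣ Y ω ∧ δ ∣ Z ω}.indicator (fun _ => (1 : ℂ)) ω ∂P := by
        rw [integral_indicator_const _ hE, Complex.real_smul, mul_one]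
    _ = ∫ ω, (if d ∣ Y ω then 1 else 0) * (if δ ∣ Z ω then 1 else 0) ∂P := by
        congr with ω
        simp only [Set.indicator_apply, Set.mem_ofPred_eq]
        split_ifs <;> simp_all
    _ = ∫ ω, 1 / (d * δ) *
          ∑ j ∈ range d, ∑ h ∈ range δ, (ζ ^ j) ^ Y ω * (ξ ^ h) ^ Z ω ∂P := by
        simp only [ite_dvd_eq hζ hd, ite_dvd_eq hξ hδ, mul_mul_mul_comm, sum_mul_sum,
          one_div_mul_one_div]
    _ = _ := by
        rw [integral_const_mul,
          integral_finsetSum _ fun j _ => integrable_finsetSum _ fun h _ => hint j h]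
        simp only [integral_finsetSum _ fun h _ => hint _ h]

variable [IsProbabilityMeasure P]

theorem ae_eq_zero_or_eq_one_of_fair {X : Ω → ℕ} (hX : Measurable X)
    (h0 : P {ω | X ω = 0} = 1 / 2) (h1 : P {ω | X ω = 1} = 1 / 2) :
    ∀ᵐ ω ∂P, X ω = 0 ∨ X ω = 1 := by
  have hm0 : MeasurableSet {ω | X ω = 0} := hX (measurableSet_singleton 0)
  have hm1 : MeasurableSet {ω | X ω = 1} := hX (measurableSet_singleton 1)
  rw [ae_iff_measure_eq (p := fun ω => X ω = 0 ∨ X ω = 1) (hm0.union hm1).nullMeasurableSet,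
    measure_univ, Set.ofPred_or,
    measure_union (Set.disjoint_left.mpr fun ω h0 h1 => by simp_all) hm1, h0, h1,
    ENNReal.add_halves]

theorem integral_pow_of_fair {X : Ω → ℕ} (hX : Measurable X)
    (h0 : P {ω | X ω = 0} = 1 / 2) (h1 : P {ω | X ω = 1} = 1 / 2) (w : ℂ) :
    ∫ ω, w ^ X ω ∂P = (1 + w) / 2 := by
  have hm0 : MeasurableSet {ω | X ω = 0} := hX (measurableSet_singleton 0)
  have hm1 : MeasurableSet {ω | X ω = 1} := hX (measurableSet_singleton 1)
  have hsplit : (fun ω => w ^ X ω) =ᵐ[P]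
      fun ω => {ω | X ω = 0}.indicator (fun _ => 1) ω
        + {ω | X ω = 1}.indicator (fun _ => w) ω := by
    filter_upwards [ae_eq_zero_or_eq_one_of_fair hX h0 h1] with ω hω
    rcases hω with hω | hω <;> simp [hω]
  rw [integral_congr_ae hsplit, integral_add ((integrable_const _).indicator hm0)
    ((integrable_const _).indicator hm1), integral_indicator_const _ hm0,
    integral_indicator_const _ hm1, measureReal_def, measureReal_def, h0, h1]
  simp only [one_div, ENNReal.toReal_inv, ENNReal.toReal_ofNat, Complex.real_smul,
    Complex.ofReal_inv, Complex.ofReal_ofNat, mul_one]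
  ring

theorem integral_prod_pow_of_iIndepFun_fair {ι : Type*} {X : ι → Ω → ℕ}
    (hX : iIndepFun X P) (mX : ∀ i, Measurable (X i)) (h0 : ∀ i, P {ω | X i ω = 0} = 1 / 2)
    (h1 : ∀ i, P {ω | X i ω = 1} = 1 / 2) (c : ι → ℂ) (s : Finset ι) :
    ∫ ω, ∏ i ∈ s, c i ^ X i ω ∂P = ∏ i ∈ s, (1 + c i) / 2 := by
  rw [hX.integral_finset_prod_comp (f := fun i k => c i ^ k) (fun i => (mX i).aemeasurable)
    (fun _ => measurable_from_nat.aestronglyMeasurable) s]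
  exact prod_congr rfl fun i _ => integral_pow_of_fair (mX i) (h0 i) (h1 i) (c i)

theorem integral_pow_sum_mul_pow_sum_of_iIndepFun_fair {X : ℕ → Ω → ℕ} (hX : iIndepFun X P)
    (mX : ∀ i, Measurable (X i)) (h0 : ∀ i, P {ω | X i ω = 0} = 1 / 2)
    (h1 : ∀ i, P {ω | X i ω = 1} = 1 / 2) (u v : ℂ) {n m : ℕ} (hnm : n ≤ m) :
    ∫ ω, u ^ (∑ i ∈ range n, X i ω) * v ^ (∑ i ∈ range m, X i ω) ∂P
      = ((1 + u * v) / 2) ^ n * ((1 + v) / 2) ^ (m - n) := by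
  set c : ℕ → ℂ := fun i => if i < n then u * v else v
  have hc_lt : ∀ i ∈ range n, c i = u * v := fun i hi => if_pos (mem_range.mp hi)
  have hc_ge : ∀ i ∈ Ico n m, c i = v := fun i hi => if_neg (mem_Ico.mp hi).1.not_gt
  have hprod : ∀ ω, u ^ (∑ i ∈ range n, X i ω) * v ^ (∑ i ∈ range m, X i ω)
      = ∏ i ∈ range m, c i ^ X i ω := by
    intro ω
    rw [← prod_range_mul_prod_Ico _ hnm,
      prod_congr rfl fun i hi => congrArg (· ^ X i ω) (hc_lt i hi),
      prod_congr rfl fun i hi => congrArg (· ^ X i ω) (hc_ge i hi), prod_pow_eq_pow_sum,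
      prod_pow_eq_pow_sum, ← sum_range_add_sum_Ico _ hnm, mul_pow, pow_add]
    ring
  simp_rw [hprod]
  rw [integral_prod_pow_of_iIndepFun_fair hX mX h0 h1, ← prod_range_mul_prod_Ico _ hnm,
    prod_congr rfl fun i hi => congrArg (fun z => (1 + z) / 2) (hc_lt i hi),
    prod_congr rfl fun i hi => congrArg (fun z => (1 + z) / 2) (hc_ge i hi), prod_const, prod_const,
    card_range, Nat.card_Ico]

end

theorem prob_joint_dvd_bernoulli_sum_eq_cos_sum_general
    {Ω : Type*} [MeasurableSpace Ω] (P : Measure Ω) [IsProbabilityMeasure P]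
    (b : ℕ → Ω → ℕ) (hmeas : ∀ i, Measurable (b i))
    (hindep : iIndepFun b P)
    (h0 : ∀ i, P {ω | b i ω = 0} = 1/2) (h1 : ∀ i, P {ω | b i ω = 1} = 1/2)
    (B : ℕ → Ω → ℕ) (hB : ∀ n ω, B n ω = ∑ i ∈ Finset.range n, b (i + 1) ω)
    (d δ n m : ℕ) (hd : 0 < d) (hδ : 0 < δ) (hnm : n ≤ m) :
    ((P {ω | d ∣ B n ω ∧ δ ∣ B m ω}).toReal : ℂ)
      = (1 / ((d : ℂ) * (δ : ℂ))) * ∑ j ∈ Finset.range d, ∑ h ∈ Finset.range δ,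
          Complex.exp (Complex.I * Real.pi *
              ((j : ℂ) / (d : ℂ) * (n : ℂ) + (h : ℂ) / (δ : ℂ) * (m : ℂ)))
            * ((Real.cos (Real.pi * ((j : ℝ) / (d : ℝ) + (h : ℝ) / (δ : ℝ))) : ℂ)) ^ n
            * ((Real.cos (Real.pi * (h : ℝ) / (δ : ℝ)) : ℂ)) ^ (m - n) := by
  have hBmeas (k : ℕ) : Measurable (B k) := by
    rw [funext (hB k)]
    exact Finset.measurable_sum _ fun i _ => hmeas (i + 1)
  have hroot (k i : ℕ) :
      Complex.exp (2 * π * Complex.I / k) ^ i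
        = Complex.exp (2 * π * Complex.I * ((i / k : ℝ) : ℂ)) := by
    rw [← Complex.exp_nat_mul]
    push_cast
    ring_nf
  rw [← measureReal_def, measureReal_dvd_and_dvd_eq_sum_integral (hBmeas n) (hBmeas m)
    (Complex.isPrimitiveRoot_exp d hd.ne') (Complex.isPrimitiveRoot_exp δ hδ.ne') hd.ne' hδ.ne']
  congr 1
  refine sum_congr rfl fun j _ => sum_congr rfl fun h _ => ?_
  simp only [hB]
  rw [integral_pow_sum_mul_pow_sum_of_iIndepFun_fair (hindep.precomp Nat.succ_injective)
    (fun i => hmeas (i + 1)) (fun i => h0 (i + 1)) (fun i => h1 (i + 1)) _ _ hnm,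
    hroot d, hroot δ, ← exp_mul_cos_pow_mul_cos_pow _ _ hnm, mul_div_assoc]
  push_cast
  rfl

/-- the joint characteristic–function formula (2.2)/(2.3):
`P{d ∣ B_n, δ ∣ B_m} = (1/(dδ)) ∑_{j=0}^{d-1} ∑_{h=0}^{δ-1}
  e^{iπ(jn/d + hm/δ)} cos^n(π(j/d + h/δ)) cos^{m-n}(π h/δ)`. -/
theorem prob_joint_dvd_bernoulli_sum_eq_cos_sum
    {Ω : Type*} [MeasurableSpace Ω] (P : Measure Ω) [IsProbabilityMeasure P]
    (b : ℕ → Ω → ℕ) (hmeas : ∀ i, Measurable (b i))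
    (hindep : iIndepFun b P)
    (h0 : ∀ i, P {ω | b i ω = 0} = 1/2) (h1 : ∀ i, P {ω | b i ω = 1} = 1/2)
    (B : ℕ → Ω → ℕ) (hB : ∀ n ω, B n ω = ∑ i ∈ Finset.range n, b (i + 1) ω)
    (d δ n m : ℕ) (hd : 0 < d) (hδ : 0 < δ) (hn : 1 ≤ n) (hnm : n ≤ m) :
    ((P {ω | d ∣ B n ω ∧ δ ∣ B m ω}).toReal : ℂ)
      = (1 / ((d : ℂ) * (δ : ℂ))) * ∑ j ∈ Finset.range d, ∑ h ∈ Finset.range δ,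
          Complex.exp (Complex.I * Real.pi *
              ((j : ℂ) / (d : ℂ) * (n : ℂ) + (h : ℂ) / (δ : ℂ) * (m : ℂ)))
            * ((Real.cos (Real.pi * ((j : ℝ) / (d : ℝ) + (h : ℝ) / (δ : ℝ))) : ℂ)) ^ n
            * ((Real.cos (Real.pi * (h : ℝ) / (δ : ℝ)) : ℂ)) ^ (m - n) :=
  prob_joint_dvd_bernoulli_sum_eq_cos_sum_general P b hmeas hindep h0 h1 B hB d δ n m hd hδ hnm
end

section
/- Fix $0<c<1$ and reals $\alpha>\alpha'>\max(3/2,\,1/c)$. There exist constants $C$ and $n_0$ depending on $c$ (and $\alpha,\alpha'$) such that for all positive integers $d,\delta$ and all $n\ge n_0$ and $m$ with $n+n^{c}\le m\le 2n$: $\big|\Psi((d,n),(\delta,m))\big| \le C\Big\{ n\big(\tfrac{\log(m-n)}{m-n}\big)^{1/c} + \frac{1}{d\delta}\sum_{(j,h)} e^{-3n(\frac{j}{d}-\frac{h}{\delta})^2}\Big\}$, where the sum is over integer pairs $(j,h)$ with $0<\frac{\pi j}{d}\le 2\big(\tfrac{2\alpha\log(m-n)}{m-n}\big)^{1/2}$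 and $0<\frac{\pi h}{\delta}\le \big(\tfrac{2\alpha\log(m-n)}{m-n}\big)^{1/2}$. In particular, if $\max(d,\delta)<\frac{\pi}{2\sqrt{2\alpha}}\big(\tfrac{m-n}{\log(m-n)}\big)^{1/2}$, then $\big|\Psi((d,n),(\delta,m))\big|\le C\, n\big(\tfrac{\log(m-n)}{m-n}\big)^{1/c}$. -/
/-!
After the triangle inequality each term of `Ψ` is `|cos(π(u + v))|^n |cos(πv)|^(m-n)` with
`u = j/d`, `v = h/δ`. Put `E = √(2α log(m-n)/(m-n))`. The second factor is at most `cos E ^ (m-n)`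
unless `πv` is within `E` of `0` or `π`; in that case the first factor is at most `cos E ^ n`
unless `πu` is within `2E` of `0` or `π` as well, and near these four corners of the torus
`cos t ≤ exp(-t²/3)` yields the Gaussian terms; the reflections `j ↦ d - j`, `h ↦ δ - h` fold
the four corners onto one, whence the constant `4`. Finally `cos E ≤ exp(-(α'/α) E²/2)` for large
`m - n`, so `cos E ^ (m-n) ≤ (m-n)^(-α')`, which is `O(n (log(m-n)/(m-n))^(1/c))` as `α' > 1/c`.
If `d < π/(2E)`, no lattice point lies near a corner and only this term survives.
-/

open Finset Real
open scoped Classical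
open Filter Topology

noncomputable section

/-- The trigonometric sum `Ψ((d,n),(δ,m))` of (2.6). -/
def Psi (d δ n m : ℕ) : ℂ :=
  (1 / ((d : ℂ) * (δ : ℂ))) * ∑ j ∈ Finset.Ico 1 d, ∑ h ∈ Finset.Ico 1 δ,
    Complex.exp (Complex.I * Real.pi *
        ((j : ℂ) / (d : ℂ) * (n : ℂ) + (h : ℂ) / (δ : ℂ) * (m : ℂ)))
      * ((Real.cos (Real.pi * ((j : ℝ) / (d : ℝ) + (h : ℝ) / (δ : ℝ))) : ℂ)) ^ n
      * ((Real.cos (Real.pi * (h : ℝ) / (δ : ℝ)) : ℂ)) ^ (m - n)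

-- `48 / 5 = (1 / 2) / (5 / 96)`, with `5 / 96` the quartic error term of `Real.cos_bound`.
theorem cos_le_exp_neg_mul_sq {t r : ℝ} (ht : |t| ≤ 1) (htr : t ^ 2 ≤ 48 / 5 * (1 - r)) :
    cos t ≤ exp (-(r * t ^ 2 / 2)) := by
  have hcos := (abs_le.mp (cos_bound ht)).2
  rw [show |t| ^ 4 = (t ^ 2) ^ 2 by rw [← sq_abs t]; ring] at hcos
  nlinarith [add_one_le_exp (-(r * t ^ 2 / 2)), mul_nonneg (sq_nonneg t) (sub_nonneg.2 htr)]

theorem abs_cos_pow_le_exp {t : ℝ} (ht : |t| ≤ 1) (n : ℕ) :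
    |cos t| ^ n ≤ exp (-(3 * n) * (t / π) ^ 2) := by
  have hcos : 0 ≤ cos t := (cos_pos_of_le_one ht).le
  have hexp := cos_le_exp_neg_mul_sq (r := 2 / 3) ht
    (by nlinarith [(sq_le_one_iff_abs_le_one t).2 ht])
  have hπ : 9 ≤ π ^ 2 := by nlinarith [pi_gt_three]
  calc |cos t| ^ n ≤ exp (-(2 / 3 * t ^ 2 / 2)) ^ n :=
        pow_le_pow_left₀ (abs_nonneg _) ((abs_of_nonneg hcos).trans_le hexp) n
    _ = exp (-(n * t ^ 2 / 3)) := by rw [← exp_nat_mul]; ring_nf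
    _ ≤ exp (-(3 * n) * (t / π) ^ 2) := by
        rw [exp_le_exp, div_pow, neg_mul, neg_le_neg_iff, mul_div_assoc']
        rw [div_le_div_iff₀ (by positivity) (by positivity)]
        nlinarith [mul_nonneg (Nat.cast_nonneg n : (0:ℝ) ≤ n) (sq_nonneg t)]

theorem abs_cos_le_cos_of_mem_Icc {E s : ℝ} (hE : 0 ≤ E) (hs : s ∈ Set.Icc E (π - E)) :
    |cos s| ≤ cos E := by
  rw [abs_le]
  constructor
  · have h := cos_le_cos_of_nonneg_of_le_pi (by linarith [hs.1]) (by linarith) hs.2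
    rw [cos_pi_sub] at h
    linarith
  · exact cos_le_cos_of_nonneg_of_le_pi hE (by linarith [hs.1, hs.2]) hs.1

def gaussWeight (n : ℕ) (E u v : ℝ) : ℝ :=
  if π * u ≤ 2 * E ∧ π * v ≤ E then exp (-(3 * n) * (u - v) ^ 2) else 0

theorem gaussWeight_nonneg (n : ℕ) (E u v : ℝ) : 0 ≤ gaussWeight n E u v := by
  unfold gaussWeight; split_ifs <;> positivity

theorem abs_cos_pow_le_of_pi_mul_lt {n : ℕ} {E u v : ℝ} (hE : 0 ≤ E) (hE1 : 3 * E ≤ 1)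
    (hu : u ∈ Set.Icc 0 1) (hv0 : 0 ≤ v) (hvE : π * v < E) :
    |cos (π * (u + v))| ^ n ≤ cos E ^ n + gaussWeight n E u v + gaussWeight n E (1 - u) v := by
  have hg := gaussWeight_nonneg n E u v
  have hg' := gaussWeight_nonneg n E (1 - u) v
  have hcosE : 0 ≤ cos E ^ n :=
    pow_nonneg (cos_pos_of_le_one (abs_le.2 ⟨by linarith, by linarith⟩)).le n
  have hπv : 0 ≤ π * v := mul_nonneg pi_pos.le hv0
  have hπu : 0 ≤ π * u ∧ π * u ≤ π :=
    ⟨mul_nonneg pi_pos.le hu.1, mul_le_of_le_one_right pi_pos.le hu.2⟩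
  rcases le_or_gt (π * u) (2 * E) with hsmall | hlarge
  · have hw : gaussWeight n E u v = exp (-(3 * n) * (u - v) ^ 2) := if_pos ⟨hsmall, hvE.le⟩
    have hgauss := abs_cos_pow_le_exp (t := π * (u + v))
      (by rw [abs_of_nonneg (mul_nonneg pi_pos.le (by linarith [hu.1]))]; linarith) n
    rw [mul_div_cancel_left₀ _ pi_ne_zero] at hgauss
    have hmono : exp (-(3 * n) * (u + v) ^ 2) ≤ exp (-(3 * n) * (u - v) ^ 2) := by
      rw [exp_le_exp, neg_mul, neg_mul, neg_le_neg_iff]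
      exact mul_le_mul_of_nonneg_left (by nlinarith [hu.1]) (by positivity)
    linarith
  rcases le_or_gt (π * u) (π - 2 * E) with hmid | hnear
  · have hc := abs_cos_le_cos_of_mem_Icc hE (s := π * (u + v)) ⟨by linarith, by linarith⟩
    have := pow_le_pow_left₀ (abs_nonneg _) hc n
    linarith
  · have hw : gaussWeight n E (1 - u) v = exp (-(3 * n) * ((1 - u) - v) ^ 2) :=
      if_pos ⟨by linarith, hvE.le⟩
    have hgauss := abs_cos_pow_le_exp (t := π * (u + v) - π)
      (by rw [abs_le]; constructor <;> linarith) n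
    rw [cos_sub_pi, abs_neg, ← mul_sub_one, mul_div_cancel_left₀ _ pi_ne_zero,
      show (u + v - 1) ^ 2 = ((1 - u) - v) ^ 2 by ring] at hgauss
    linarith

theorem abs_cos_pow_mul_abs_cos_pow_le {n M : ℕ} (hMn : M ≤ n) {E u v : ℝ} (hE : 0 ≤ E)
    (hE1 : 3 * E ≤ 1) (hu : u ∈ Set.Icc 0 1) (hv : v ∈ Set.Icc 0 1) :
    |cos (π * (u + v))| ^ n * |cos (π * v)| ^ M ≤ cos E ^ M +
      (gaussWeight n E u v + gaussWeight n E (1 - u) v +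
        gaussWeight n E u (1 - v) + gaussWeight n E (1 - u) (1 - v)) := by
  have hg := gaussWeight_nonneg n E
  have hcosE : 0 ≤ cos E := (cos_pos_of_le_one (abs_le.2 ⟨by linarith, by linarith⟩)).le
  have hpow : cos E ^ n ≤ cos E ^ M := pow_le_pow_of_le_one hcosE (cos_le_one E) hMn
  have hfirst : |cos (π * (u + v))| ^ n ≤ 1 := pow_le_one₀ (abs_nonneg _) (abs_cos_le_one _)
  have hsecond : |cos (π * v)| ^ M ≤ 1 := pow_le_one₀ (abs_nonneg _) (abs_cos_le_one _)
  have hprod : |cos (π * (u + v))| ^ n * |cos (π * v)| ^ M ≤ |cos (π * (u + v))| ^ n :=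
    mul_le_of_le_one_right (by positivity) hsecond
  rcases lt_or_ge (π * v) E with hlow | hlow
  · have := abs_cos_pow_le_of_pi_mul_lt (n := n) hE hE1 hu hv.1 hlow
    linarith [hg u (1 - v), hg (1 - u) (1 - v)]
  rcases le_or_gt (π * v) (π - E) with hmid | hhigh
  · have hc := pow_le_pow_left₀ (abs_nonneg _) (abs_cos_le_cos_of_mem_Icc hE ⟨hlow, hmid⟩) M
    have := mul_le_of_le_one_left (by positivity) hfirst (b := |cos (π * v)| ^ M)
    linarith [hg u v, hg (1 - u) v, hg u (1 - v), hg (1 - u) (1 - v)]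
  · have hreflect : cos (π * (u + v)) = cos (π * ((1 - u) + (1 - v))) := by
      rw [← cos_two_pi_sub]; ring_nf
    have := abs_cos_pow_le_of_pi_mul_lt (n := n) (u := 1 - u) (v := 1 - v) hE hE1
      ⟨by linarith [hu.2], by linarith [hu.1]⟩ (by linarith [hv.2]) (by linarith)
    rw [sub_sub_cancel, ← hreflect] at this
    linarith [hg u v, hg (1 - u) v]

theorem norm_Psi_le_sum (d δ n m : ℕ) :
    ‖Psi d δ n m‖ ≤ 1 / ((d : ℝ) * δ) * ∑ j ∈ Ico 1 d, ∑ h ∈ Ico 1 δ,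
      |cos (π * ((j : ℝ) / d + (h : ℝ) / δ))| ^ n * |cos (π * h / δ)| ^ (m - n) := by
  rw [Psi, norm_mul, norm_div, norm_one, norm_mul, Complex.norm_natCast, Complex.norm_natCast]
  gcongr
  refine (norm_sum_le _ _).trans (sum_le_sum fun j _ => (norm_sum_le _ _).trans
    (sum_le_sum fun h _ => le_of_eq ?_))
  have harg : Complex.I * π * ((j : ℂ) / d * n + (h : ℂ) / δ * m)
      = ((π * ((j : ℝ) / d * n + (h : ℝ) / δ * m) : ℝ) : ℂ) * Complex.I := by
    push_cast; ring
  rw [norm_mul, norm_mul, harg, Complex.norm_exp_ofReal_mul_I, one_mul, norm_pow, norm_pow,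
    Complex.norm_real, Complex.norm_real, norm_eq_abs, norm_eq_abs]

theorem sum_Ico_one_sub_div {d : ℕ} (f : ℝ → ℝ) :
    ∑ j ∈ Ico 1 d, f (1 - j / d) = ∑ j ∈ Ico 1 d, f (j / d) := by
  have hreflect := sum_Ico_reflect (fun j => f (j / d)) 1 (Nat.le_succ d)
  rw [Nat.add_sub_cancel_left, Nat.add_sub_cancel] at hreflect
  rw [← hreflect]
  refine sum_congr rfl fun j hj => ?_
  have hd : 0 < (d : ℝ) := by have := mem_Ico.1 hj; exact_mod_cast (by omega : 0 < d)
  rw [Nat.cast_sub (mem_Ico.1 hj).2.le, sub_div, div_self hd.ne']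

theorem sum_sum_abs_cos_pow_le {d δ n M : ℕ} (hMn : M ≤ n) {E : ℝ} (hE : 0 ≤ E)
    (hE1 : 3 * E ≤ 1) :
    ∑ j ∈ Ico 1 d, ∑ h ∈ Ico 1 δ,
      |cos (π * ((j : ℝ) / d + (h : ℝ) / δ))| ^ n * |cos (π * h / δ)| ^ M ≤
    d * δ * cos E ^ M + 4 * ∑ j ∈ Ico 1 d, ∑ h ∈ Ico 1 δ, gaussWeight n E (j / d) (h / δ) := by
  have hunit : ∀ {k N : ℕ}, k ∈ Ico 1 N → (k : ℝ) / N ∈ Set.Icc 0 1 := fun hk =>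
    ⟨by positivity, div_le_one_of_le₀ (by exact_mod_cast (mem_Ico.1 hk).2.le) (by positivity)⟩
  have hcosE : 0 ≤ cos E ^ M :=
    pow_nonneg (cos_pos_of_le_one (abs_le.2 ⟨by linarith, by linarith⟩)).le M
  have hcount : ((Ico 1 d).card * (Ico 1 δ).card : ℝ) ≤ d * δ := by
    rw [Nat.card_Ico, Nat.card_Ico]
    gcongr <;> exact_mod_cast Nat.sub_le _ _
  calc _ ≤ ∑ j ∈ Ico 1 d, ∑ h ∈ Ico 1 δ, (cos E ^ M +
        (gaussWeight n E (j / d) (h / δ) + gaussWeight n E (1 - j / d) (h / δ) +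
          gaussWeight n E (j / d) (1 - h / δ) + gaussWeight n E (1 - j / d) (1 - h / δ))) := by
        gcongr with j hj h hh
        rw [mul_div_assoc]
        exact abs_cos_pow_mul_abs_cos_pow_le hMn hE hE1 (hunit hj) (hunit hh)
    _ = (Ico 1 d).card * (Ico 1 δ).card * cos E ^ M +
        4 * ∑ j ∈ Ico 1 d, ∑ h ∈ Ico 1 δ, gaussWeight n E (j / d) (h / δ) := by
        simp only [sum_add_distrib, sum_const, nsmul_eq_mul]
        rw [sum_Ico_one_sub_div (fun u => ∑ h ∈ Ico 1 δ, gaussWeight n E u (h / δ)),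
          sum_Ico_one_sub_div (fun u => ∑ h ∈ Ico 1 δ, gaussWeight n E u (1 - h / δ))]
        simp only [sum_Ico_one_sub_div (gaussWeight n E _)]
        ring
    _ ≤ _ := by gcongr

def latticeGaussWeight (d δ n : ℕ) (E : ℝ) (p : ℕ × ℕ) : ℝ :=
  if 0 < p.1 ∧ π * (p.1 : ℝ) / (d : ℝ) ≤ 2 * E ∧ 0 < p.2 ∧ π * (p.2 : ℝ) / (δ : ℝ) ≤ E
  then exp (-(3 * (n : ℝ)) * ((p.1 : ℝ) / (d : ℝ) - (p.2 : ℝ) / (δ : ℝ)) ^ 2) else 0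

theorem lt_of_pi_mul_div_le {k N : ℕ} (hN : 0 < N) {E : ℝ} (hE : E < π) (hk : π * k / N ≤ E) :
    k < N := by
  have hN' : (0 : ℝ) < N := by exact_mod_cast hN
  rw [div_le_iff₀ hN'] at hk
  exact_mod_cast lt_of_mul_lt_mul_left (hk.trans_lt (mul_lt_mul_of_pos_right hE hN')) pi_pos.le

theorem tsum_latticeGaussWeight {d δ : ℕ} (hd : 0 < d) (hδ : 0 < δ) (n : ℕ) {E : ℝ}
    (hE : 2 * E < π) :
    ∑' p, latticeGaussWeight d δ n E p =
      ∑ j ∈ Ico 1 d, ∑ h ∈ Ico 1 δ, gaussWeight n E (j / d) (h / δ) := by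
  rw [tsum_eq_sum (s := Ico 1 d ×ˢ Ico 1 δ), sum_product]
  · refine sum_congr rfl fun j hj => sum_congr rfl fun h hh => ?_
    simp only [latticeGaussWeight, gaussWeight, mul_div_assoc,
      show 0 < j from (mem_Ico.1 hj).1, show 0 < h from (mem_Ico.1 hh).1, true_and]
  · intro p hp
    refine if_neg fun ⟨h1, h2, h3, h4⟩ => hp ?_
    rw [mem_product, mem_Ico, mem_Ico]
    exact ⟨⟨h1, lt_of_pi_mul_div_le hd hE h2⟩, h3, lt_of_pi_mul_div_le hδ
      (by linarith [show 0 ≤ π * (p.2 : ℝ) / δ by positivity]) h4⟩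

theorem latticeGaussWeight_eq_zero {d : ℕ} (hd : 0 < d) (δ n : ℕ) {E : ℝ}
    (hdE : (d : ℝ) < π / (2 * E)) (p : ℕ × ℕ) : latticeGaussWeight d δ n E p = 0 := by
  refine if_neg fun ⟨h1, h2, _⟩ => ?_
  have hE : 0 < 2 * E := by
    by_contra! h
    linarith [div_nonpos_of_nonneg_of_nonpos pi_pos.le h, (Nat.cast_nonneg d : (0 : ℝ) ≤ d)]
  have hp : (1 : ℝ) ≤ p.1 := by exact_mod_cast h1
  rw [lt_div_iff₀ hE] at hdE
  rw [div_le_iff₀ (by exact_mod_cast hd)] at h2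
  nlinarith [pi_pos]

theorem norm_Psi_le {d δ n m : ℕ} (hd : 0 < d) (hδ : 0 < δ) (hmn : m - n ≤ n) {E : ℝ}
    (hE : 0 ≤ E) (hE1 : 3 * E ≤ 1) :
    ‖Psi d δ n m‖ ≤
      cos E ^ (m - n) + 4 * (1 / ((d : ℝ) * δ) * ∑' p, latticeGaussWeight d δ n E p) := by
  rw [tsum_latticeGaussWeight hd hδ n (by linarith [pi_gt_three])]
  calc ‖Psi d δ n m‖ ≤ 1 / ((d : ℝ) * δ) * (d * δ * cos E ^ (m - n) +
        4 * ∑ j ∈ Ico 1 d, ∑ h ∈ Ico 1 δ, gaussWeight n E (j / d) (h / δ)) :=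
        (norm_Psi_le_sum d δ n m).trans (by gcongr; exact sum_sum_abs_cos_pow_le hmn hE hE1)
    _ = _ := by field_simp

theorem cos_sqrt_pow_le_rpow_neg {α α' : ℝ} (hα : 0 < α) {M : ℕ} (hM : 0 < M)
    (hq1 : 2 * α * log M / M ≤ 1) (hq : 2 * α * log M / M ≤ 48 / 5 * (1 - α' / α)) :
    cos √(2 * α * log M / M) ^ M ≤ (M : ℝ) ^ (-α') := by
  have hM' : (0 : ℝ) < M := by exact_mod_cast hM
  have hq0 : 0 ≤ 2 * α * log M / M := by
    have := log_nonneg (Nat.one_le_cast.2 hM)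
    positivity
  set E := √(2 * α * log M / M)
  have hE2 : E ^ 2 = 2 * α * log M / M := sq_sqrt hq0
  have hE1 : E ≤ 1 := sqrt_le_one.2 hq1
  have hE : |E| ≤ 1 := abs_le.2 ⟨by linarith [sqrt_nonneg (2 * α * log M / M)], hE1⟩
  have hcos := cos_le_exp_neg_mul_sq (r := α' / α) hE (hE2 ▸ hq)
  calc cos E ^ M ≤ exp (-(α' / α * E ^ 2 / 2)) ^ M :=
        pow_le_pow_left₀ (cos_pos_of_le_one hE).le hcos M
    _ = (M : ℝ) ^ (-α') := by
        rw [← exp_nat_mul, rpow_def_of_pos hM', hE2]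
        congr 1
        field_simp

theorem rpow_neg_le_mul_log_div_rpow {x : ℝ} (hx : exp 1 ≤ x) {n a b : ℝ} (hn : 1 ≤ n)
    (hb : 0 ≤ b) (hba : b ≤ a) : x ^ (-a) ≤ n * (log x / x) ^ b := by
  have hx1 : 1 ≤ x := le_trans (one_le_exp zero_le_one) hx
  have hlog : 1 ≤ log x := (le_log_iff_exp_le (by linarith)).2 hx
  calc x ^ (-a) ≤ x ^ (-b) := rpow_le_rpow_of_exponent_le hx1 (neg_le_neg hba)
    _ = (1 / x) ^ b := by rw [rpow_neg (by linarith), one_div, inv_rpow (by linarith)]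
    _ ≤ (log x / x) ^ b := by gcongr
    _ ≤ n * (log x / x) ^ b := le_mul_of_one_le_left (by positivity) hn

theorem exists_cos_sqrt_pow_le {c α α' : ℝ} (hc : 0 < c) (hα' : 1 / c < α') (hαα' : α' < α) :
    ∃ n₀ : ℕ, ∀ n M : ℕ, n₀ ≤ n → (n : ℝ) ^ c ≤ M → M ≤ n →
      3 * √(2 * α * log M / M) ≤ 1 ∧
        cos √(2 * α * log M / M) ^ M ≤ n * (log M / M) ^ ((1 : ℝ) / c) := by
  have hα : 0 < α := by linarith [one_div_pos.2 hc]
  have hK : 0 < min (1 / 9) (48 / 5 * (1 - α' / α)) :=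
    lt_min (by norm_num) (by linarith [(div_lt_one hα).2 hαα'])
  have hdecay : Tendsto (fun x : ℝ => 2 * α * log x / x) atTop (𝓝 0) := by
    simpa [mul_div_assoc] using isLittleO_log_id_atTop.tendsto_div_nhds_zero.const_mul (2 * α)
  obtain ⟨R, hR⟩ := eventually_atTop.1
    ((hdecay.eventually (gt_mem_nhds hK)).and (eventually_ge_atTop 3))
  obtain ⟨n₀, hn₀⟩ := eventually_atTop.1
    (((tendsto_rpow_atTop hc).comp tendsto_natCast_atTop_atTop).eventually_ge_atTop R)
  refine ⟨n₀, fun n M hn hnM hMn => ?_⟩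
  obtain ⟨hq, hM3⟩ := hR M ((hn₀ n hn).trans hnM)
  have hq1 := hq.trans_le (min_le_left _ _)
  have hM : 0 < M := by exact_mod_cast (show (0 : ℝ) < M by linarith)
  refine ⟨?_, (cos_sqrt_pow_le_rpow_neg hα hM (by linarith)
    (hq.le.trans (min_le_right _ _))).trans
    (rpow_neg_le_mul_log_div_rpow (by linarith [exp_one_lt_d9]) ?_ (by positivity) hα'.le)⟩
  · rw [← le_div_iff₀' three_pos, sqrt_le_left (by norm_num)]
    linarith
  · exact_mod_cast (Nat.one_le_iff_ne_zero.2 hM.ne').trans hMn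

theorem Psi_bound_weakly_dependent_close_general
    (c α α' : ℝ) (hc0 : 0 < c)
    (hα' : max (3/2) (1/c) < α') (hαα' : α' < α) :
    ∃ (C : ℝ) (n₀ : ℕ), ∀ d δ n m : ℕ, 0 < d → 0 < δ → n₀ ≤ n →
      (n : ℝ) + (n : ℝ) ^ c ≤ (m : ℝ) → m ≤ 2 * n →
      (‖Psi d δ n m‖ ≤ C *
        ((n : ℝ) * (Real.log ((m - n : ℕ) : ℝ) / ((m - n : ℕ) : ℝ)) ^ ((1:ℝ)/c)
          + (1 / ((d : ℝ) * (δ : ℝ))) *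
            ∑' p : ℕ × ℕ,
              if 0 < p.1 ∧
                  Real.pi * (p.1 : ℝ) / (d : ℝ)
                    ≤ 2 * Real.sqrt (2 * α * Real.log ((m - n : ℕ) : ℝ) / ((m - n : ℕ) : ℝ)) ∧
                  0 < p.2 ∧
                  Real.pi * (p.2 : ℝ) / (δ : ℝ)
                    ≤ Real.sqrt (2 * α * Real.log ((m - n : ℕ) : ℝ) / ((m - n : ℕ) : ℝ))
              then Real.exp (-(3 * (n : ℝ)) * ((p.1 : ℝ) / (d : ℝ) - (p.2 : ℝ) / (δ : ℝ)) ^ 2)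
              else 0)) ∧
      (max (d : ℝ) (δ : ℝ)
          < Real.pi / (2 * Real.sqrt (2 * α)) *
              Real.sqrt (((m - n : ℕ) : ℝ) / Real.log ((m - n : ℕ) : ℝ)) →
        ‖Psi d δ n m‖ ≤ C *
          ((n : ℝ) * (Real.log ((m - n : ℕ) : ℝ) / ((m - n : ℕ) : ℝ)) ^ ((1:ℝ)/c))) := by
  obtain ⟨n₀, hn₀⟩ := exists_cos_sqrt_pow_le hc0 ((le_max_right _ _).trans_lt hα') hαα'
  refine ⟨4, n₀, fun d δ n m hd hδ hn hm hm2 => ?_⟩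
  have hnm : n ≤ m := by exact_mod_cast (le_add_of_nonneg_right (by positivity)).trans hm
  obtain ⟨hE, hcos⟩ := hn₀ n (m - n) hn (by rw [Nat.cast_sub hnm]; linarith) (by omega)
  have hPsi := norm_Psi_le (n := n) (m := m) hd hδ (by omega) (sqrt_nonneg _) hE
  have hF : 0 ≤ (n : ℝ) * (log ((m - n : ℕ) : ℝ) / ((m - n : ℕ) : ℝ)) ^ ((1 : ℝ) / c) := by
    positivity
  refine ⟨by unfold latticeGaussWeight at hPsi; linarith, fun hlt => ?_⟩
  have hα : 0 ≤ 2 * α := by linarith [(le_max_left _ _).trans_lt hα']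
  have hcutoff : π / (2 * √(2 * α)) * √(((m - n : ℕ) : ℝ) / log ((m - n : ℕ) : ℝ)) =
      π / (2 * √(2 * α * log ((m - n : ℕ) : ℝ) / ((m - n : ℕ) : ℝ))) := by
    rw [mul_div_assoc (2 * α), sqrt_mul hα, ← inv_div (log _), sqrt_inv]
    ring
  have hzero :=
    latticeGaussWeight_eq_zero hd δ n ((le_max_left _ _).trans_lt (hlt.trans_eq hcutoff))
  simp only [hzero, tsum_zero, mul_zero, add_zero] at hPsi
  linarith

/-- Proposition 2.1 (the weakly dependent case `n + n^c ≤ m ≤ 2n`). -/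
theorem Psi_bound_weakly_dependent_close
    (c α α' : ℝ) (hc0 : 0 < c) (hc1 : c < 1)
    (hα' : max (3/2) (1/c) < α') (hαα' : α' < α) :
    ∃ (C : ℝ) (n₀ : ℕ), ∀ d δ n m : ℕ, 0 < d → 0 < δ → n₀ ≤ n →
      (n : ℝ) + (n : ℝ) ^ c ≤ (m : ℝ) → m ≤ 2 * n →
      (‖Psi d δ n m‖ ≤ C *
        ((n : ℝ) * (Real.log ((m - n : ℕ) : ℝ) / ((m - n : ℕ) : ℝ)) ^ ((1:ℝ)/c)
          + (1 / ((d : ℝ) * (δ : ℝ))) *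
            ∑' p : ℕ × ℕ,
              if 0 < p.1 ∧
                  Real.pi * (p.1 : ℝ) / (d : ℝ)
                    ≤ 2 * Real.sqrt (2 * α * Real.log ((m - n : ℕ) : ℝ) / ((m - n : ℕ) : ℝ)) ∧
                  0 < p.2 ∧
                  Real.pi * (p.2 : ℝ) / (δ : ℝ)
                    ≤ Real.sqrt (2 * α * Real.log ((m - n : ℕ) : ℝ) / ((m - n : ℕ) : ℝ))
              then Real.exp (-(3 * (n : ℝ)) * ((p.1 : ℝ) / (d : ℝ) - (p.2 : ℝ) / (δ : ℝ)) ^ 2)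
              else 0)) ∧
      (max (d : ℝ) (δ : ℝ)
          < Real.pi / (2 * Real.sqrt (2 * α)) *
              Real.sqrt (((m - n : ℕ) : ℝ) / Real.log ((m - n : ℕ) : ℝ)) →
        ‖Psi d δ n m‖ ≤ C *
          ((n : ℝ) * (Real.log ((m - n : ℕ) : ℝ) / ((m - n : ℕ) : ℝ)) ^ ((1:ℝ)/c))) :=
  Psi_bound_weakly_dependent_close_general c α α' hc0 hα' hαα'
end
end

section
/- Fix $0<c<1$, reals $\alpha>\alpha'>\max(3/2,\,1/c)$ and $\delta_0>\sqrt2$. There exist constants $C$ and $n_0$ depending on $c$ (and $\alpha,\alpha',\delta_0$) such that for all $n\ge n_0$ and all $m\ge 2n$, $\sup\big\{\,\big|\mathbf\Delta((d,n),(\delta,m))\big| : d,\delta\ \text{positive integers with}\ d<\tfrac{\pi}{\sqrt{2\alpha}}\sqrt{\tfrac{n}{\log n}},\ \delta<\tfrac{\pi}{\delta_0\sqrt{2\alpha}}\sqrt{\tfrac{m}{\log m}}\big\} \le C\, n\Big(\tfrac{\log n}{n}\Big)^{1/(2c)}\Big(\tfrac{\log(m-n)}{m-n}\Big)^{1/2}$.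 -/
/-!
Write `B m = B n + T` with `T = b (n + 1) + ⋯ + b m`, which is `Bin(m - n, 1/2)` and independent
of `B n`. Conditionally on `B n = k`, the event `δ ∣ B m` has probability `P(δ ∣ k + T)`, and
filtering the binomial expansion of `((1 + ζ) / 2) ^ (m - n)` through the `δ`-th roots of unity `ζ`
shows that this is within `cos (π / δ) ^ (m - n)` of `1 / δ`, uniformly in `k`. Hence any event
depending on `B n` alone is nearly independent of `δ ∣ B m`, and `|Δ| ≤ 2 cos (π / δ) ^ (m - n)`.
As `m - n ≥ m / 2` and `δ² < π² m / (4 α log m)`, this is at most `2 m ^ (-α / 2)`, which is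
dominated by the stated bound with `C = 2`.
-/

open MeasureTheory ProbabilityTheory Finset Real

section WeightedSums

variable {ι : Type*} {s : Finset ι} {a p q w : ι → ℝ} {r ε : ℝ}

theorem abs_sum_mul_sub_le (ha : ∀ k ∈ s, 0 ≤ a k) (hap : ∀ k ∈ s, a k ≤ p k)
    (hp : ∑ k ∈ s, p k = 1) (hq : ∀ k ∈ s, |q k - r| ≤ ε) :
    |∑ k ∈ s, a k * (q k - r)| ≤ ε := by
  calc |∑ k ∈ s, a k * (q k - r)| ≤ ∑ k ∈ s, a k * |q k - r| := by
        refine (abs_sum_le_sum_abs _ _).trans_eq (sum_congr rfl fun k hk => ?_)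
        rw [abs_mul, abs_of_nonneg (ha k hk)]
    _ ≤ ∑ k ∈ s, p k * ε := sum_le_sum fun k hk =>
        mul_le_mul (hap k hk) (hq k hk) (abs_nonneg _) ((ha k hk).trans (hap k hk))
    _ = ε := by rw [← sum_mul, hp, one_mul]

theorem abs_sum_mul_mul_sub_sum_mul_mul_sum_le (hp0 : ∀ k ∈ s, 0 ≤ p k)
    (hp : ∑ k ∈ s, p k = 1) (hw : ∀ k ∈ s, w k ∈ Set.Icc 0 1) (hq : ∀ k ∈ s, |q k - r| ≤ ε) :
    |∑ k ∈ s, p k * w k * q k - (∑ k ∈ s, p k * w k) * ∑ k ∈ s, p k * q k| ≤ 2 * ε := by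
  have hcentre : ∑ k ∈ s, p k * w k * q k - (∑ k ∈ s, p k * w k) * ∑ k ∈ s, p k * q k =
      ∑ k ∈ s, p k * w k * (q k - r) - (∑ k ∈ s, p k * w k) * ∑ k ∈ s, p k * (q k - r) := by
    simp only [mul_sub, sum_sub_distrib, ← sum_mul, hp]
    ring
  have hpw : ∀ k ∈ s, p k * w k ∈ Set.Icc 0 (p k) := fun k hk =>
    ⟨mul_nonneg (hp0 k hk) (hw k hk).1, mul_le_of_le_one_right (hp0 k hk) (hw k hk).2⟩
  have hmass : |∑ k ∈ s, p k * w k| ≤ 1 := by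
    rw [abs_of_nonneg (sum_nonneg fun k hk => (hpw k hk).1), ← hp]
    exact sum_le_sum fun k hk => (hpw k hk).2
  have hfirst := abs_sum_mul_sub_le (fun k hk => (hpw k hk).1) (fun k hk => (hpw k hk).2) hp hq
  have hsecond := abs_sum_mul_sub_le hp0 (fun k _ => le_rfl) hp hq
  rw [hcentre]
  calc _ ≤ |∑ k ∈ s, p k * w k * (q k - r)|
        + |∑ k ∈ s, p k * w k| * |∑ k ∈ s, p k * (q k - r)| := by
        rw [← abs_mul]; exact abs_sub _ _
    _ ≤ ε + 1 * ε := by gcongr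
    _ = 2 * ε := by ring

end WeightedSums

section Probability

variable {Ω : Type*} [MeasurableSpace Ω] {P : Measure Ω} {X : Ω → ℕ} {M : ℕ}

theorem measureReal_eq_sum_inter_fiber [IsFiniteMeasure P] (hX : Measurable X)
    (hXM : ∀ k, M < k → P.real {ω | X ω = k} = 0) {s : Set Ω} (hs : MeasurableSet s) :
    P.real s = ∑ k ∈ range (M + 1), P.real (s ∩ {ω | X ω = k}) := by
  have hunion : ⋃ k, s ∩ {ω | X ω = k} = s := by ext ω; simp
  have hdisj : Pairwise fun i j => Disjoint (s ∩ {ω | X ω = i}) (s ∩ {ω | X ω = j}) :=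
    fun i j hij => Set.disjoint_left.2 fun ω hi hj => hij (hi.2.symm.trans hj.2)
  have htail : ∀ k ∉ range (M + 1), P (s ∩ {ω | X ω = k}) = 0 := fun k hk =>
    measure_mono_null Set.inter_subset_right
      ((measureReal_eq_zero_iff (measure_ne_top P _)).1 (hXM k (by simpa using hk)))
  calc P.real s = (P (⋃ k, s ∩ {ω | X ω = k})).toReal := by rw [hunion]; rfl
    _ = _ := by
      rw [measure_iUnion hdisj fun k => hs.inter (hX (.singleton k)), tsum_eq_sum htail,
        ENNReal.toReal_sum fun k _ => measure_ne_top _ _]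
      rfl

theorem measureReal_setOf_eq_sum [IsFiniteMeasure P] (hX : Measurable X)
    (hXM : ∀ k, M < k → P.real {ω | X ω = k} = 0) (R : ℕ → Prop) [DecidablePred R] :
    P.real {ω | R (X ω)} = ∑ k ∈ range (M + 1) with R k, P.real {ω | X ω = k} := by
  have hR : MeasurableSet {ω | R (X ω)} := hX (.of_discrete (s := {k | R k}))
  rw [measureReal_eq_sum_inter_fiber hX hXM hR, sum_filter]
  refine sum_congr rfl fun k _ => ?_
  split_ifs with hk
  · congr 1; ext ω; simp only [Set.mem_inter_iff, Set.mem_ofPred_eq]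
    exact ⟨And.right, fun h => ⟨h ▸ hk, h⟩⟩
  · convert measureReal_empty (μ := P)
    ext ω; simp only [Set.mem_inter_iff, Set.mem_ofPred_eq, Set.mem_empty_iff_false, iff_false]
    rintro ⟨h, rfl⟩; exact hk h

theorem measureReal_setOf_eq_sum_mul [IsFiniteMeasure P] {Y : Ω → ℕ} (hX : Measurable X)
    (hY : Measurable Y) (hXY : IndepFun X Y P) (hXM : ∀ k, M < k → P.real {ω | X ω = k} = 0)
    (R : ℕ → ℕ → Prop) :
    P.real {ω | R (X ω) (Y ω)} =
      ∑ k ∈ range (M + 1), P.real {ω | X ω = k} * P.real {ω | R k (Y ω)} := by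
  have hR : MeasurableSet {ω | R (X ω) (Y ω)} :=
    (hX.prodMk hY) (.of_discrete (s := {p : ℕ × ℕ | R p.1 p.2}))
  rw [measureReal_eq_sum_inter_fiber hX hXM hR]
  refine sum_congr rfl fun k _ => ?_
  have hfiber : {ω | R (X ω) (Y ω)} ∩ {ω | X ω = k} = X ⁻¹' {k} ∩ Y ⁻¹' {t | R k t} := by
    ext ω
    simp only [Set.mem_inter_iff, Set.mem_ofPred_eq, Set.mem_preimage, Set.mem_singleton_iff]
    constructor
    · rintro ⟨h, rfl⟩; exact ⟨rfl, h⟩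
    · rintro ⟨rfl, h⟩; exact ⟨h, rfl⟩
  rw [hfiber, measureReal_def, hXY.measure_inter_preimage_eq_mul _ _ .of_discrete .of_discrete,
    ENNReal.toReal_mul]
  rfl

theorem abs_measureReal_inter_sub_mul_le [IsProbabilityMeasure P] {S T : Ω → ℕ}
    (hS : Measurable S) (hT : Measurable T) (hST : IndepFun S T P)
    (hSM : ∀ k, M < k → P.real {ω | S ω = k} = 0) (A E : ℕ → Prop) {r ε : ℝ}
    (hE : ∀ k, |P.real {ω | E (k + T ω)} - r| ≤ ε) :
    |P.real {ω | A (S ω) ∧ E (S ω + T ω)}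
      - P.real {ω | A (S ω)} * P.real {ω | E (S ω + T ω)}| ≤ 2 * ε := by
  have hcond := measureReal_setOf_eq_sum_mul hS hT hST hSM
  have hmass : ∑ k ∈ range (M + 1), P.real {ω | S ω = k} = 1 := by
    simpa using (hcond fun _ _ => True).symm
  have hjoint : ∀ k, P.real {ω | A k ∧ E (k + T ω)} =
      P.real {ω | A k} * P.real {ω | E (k + T ω)} := fun k => by
    by_cases hk : A k <;> simp [hk]
  rw [hcond fun k t => A k ∧ E (k + t), hcond fun k _ => A k, hcond fun k t => E (k + t)]
  simp only [hjoint, ← mul_assoc]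
  exact abs_sum_mul_mul_sub_sum_mul_mul_sum_le (fun k _ => measureReal_nonneg) hmass
    (fun k _ => ⟨measureReal_nonneg, measureReal_le_one⟩) fun k _ => hE k

theorem measure_setOf_eq_eq_zero_of_two_le [IsProbabilityMeasure P] (hX : Measurable X)
    (h0 : P {ω | X ω = 0} = 1 / 2) (h1 : P {ω | X ω = 1} = 1 / 2) {t : ℕ} (ht : 2 ≤ t) :
    P {ω | X ω = t} = 0 := by
  have hdisj : ∀ {i j : ℕ}, i ≠ j → Disjoint {ω | X ω = i} {ω | X ω = j} := fun hij =>
    Set.disjoint_left.2 fun ω hi hj => hij (hi.symm.trans hj)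
  have hunion : P {ω | X ω = 0} + P {ω | X ω = 1} + P {ω | X ω = t} ≤ 1 := by
    rw [← measure_union (hdisj zero_ne_one) (hX (.singleton 1)),
      ← measure_union (Set.disjoint_union_left.2 ⟨hdisj (by omega), hdisj (by omega)⟩)
        (hX (.singleton t))]
    exact prob_le_one
  rw [h0, h1, ENNReal.add_halves, ← add_zero 1, add_assoc, zero_add,
    ENNReal.add_le_add_iff_left ENNReal.one_ne_top] at hunion
  exact nonpos_iff_eq_zero.1 hunion

theorem ProbabilityTheory.iIndepFun.indepFun_finsetSum_finsetSum {ι β : Type*} [AddCommMonoid β]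
    [MeasurableSpace β] [MeasurableAdd₂ β] {b : ι → Ω → β} (hindep : iIndepFun b P)
    (hmeas : ∀ i, Measurable (b i)) {s t : Finset ι} (hst : Disjoint s t) :
    IndepFun (fun ω => ∑ i ∈ s, b i ω) (fun ω => ∑ i ∈ t, b i ω) P := by
  have hsum : ∀ (u : Finset ι) ω, ∑ i : u, b i ω = ∑ i ∈ u, b i ω := fun u ω =>
    sum_coe_sort u fun i => b i ω
  have h := (hindep.indepFun_finset s t hst hmeas).comp
    (Finset.measurable_sum univ fun i _ => measurable_pi_apply i)
    (Finset.measurable_sum univ fun i _ => measurable_pi_apply i)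
  simpa only [Function.comp_def, hsum] using h

theorem measureReal_sum_eq_choose [IsProbabilityMeasure P] {ι : Type*} {b : ι → Ω → ℕ}
    (hmeas : ∀ i, Measurable (b i)) (hindep : iIndepFun b P)
    (h0 : ∀ i, P {ω | b i ω = 0} = 1 / 2) (h1 : ∀ i, P {ω | b i ω = 1} = 1 / 2)
    (s : Finset ι) (k : ℕ) :
    P.real {ω | ∑ i ∈ s, b i ω = k} = (#s).choose k / 2 ^ #s := by
  classical
  induction s using Finset.induction_on generalizing k with
  | empty => cases k <;> simp
  | insert j s hj ih =>
    have hind : IndepFun (b j) (fun ω => ∑ i ∈ s, b i ω) P := by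
      simpa only [Finset.sum_fn] using (hindep.indepFun_finsetSum_of_notMem hmeas hj).symm
    have hbit : ∀ t, 1 < t → P.real {ω | b j ω = t} = 0 := fun t ht => by
      simp [measureReal_def, measure_setOf_eq_eq_zero_of_two_le (hmeas j) (h0 j) (h1 j) ht]
    have hbit0 : P.real {ω | b j ω = 0} = 1 / 2 := by simp [measureReal_def, h0]
    have hbit1 : P.real {ω | b j ω = 1} = 1 / 2 := by simp [measureReal_def, h1]
    rw [card_insert_of_notMem hj]
    simp only [sum_insert hj]
    rw [measureReal_setOf_eq_sum_mul (hmeas j) (Finset.measurable_sum s fun i _ => hmeas i) hind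
      hbit (fun t x => t + x = k)]
    simp only [sum_range_succ, range_one, sum_singleton, zero_add, hbit0, hbit1, ih]
    cases k with
    | zero => simp [pow_succ]
    | succ k =>
      simp only [add_comm 1, Nat.add_right_cancel_iff, ih, Nat.choose_succ_succ']
      push_cast; ring

end Probability

section RootsOfUnity

theorem IsPrimitiveRoot.sum_pow_mul_eq_ite {K : Type*} [Field K] {ζ : K} {δ : ℕ}
    (hζ : IsPrimitiveRoot ζ δ) (a : ℕ) :
    ∑ j ∈ range δ, ζ ^ (a * j) = if δ ∣ a then (δ : K) else 0 := by
  simp_rw [pow_mul]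
  split_ifs with ha
  · simp [(hζ.pow_eq_one_iff_dvd a).2 ha]
  · rw [geom_sum_eq ((hζ.pow_eq_one_iff_dvd a).not.2 ha), ← pow_mul, mul_comm, pow_mul,
      hζ.pow_eq_one, one_pow, sub_self, zero_div]

theorem sum_choose_filter_dvd_eq {K : Type*} [Field K] [CharZero K] {ζ : K} {δ : ℕ}
    (hζ : IsPrimitiveRoot ζ δ) (hδ : 0 < δ) (N k : ℕ) :
    ∑ t ∈ range (N + 1) with δ ∣ k + t, (N.choose t : K) / 2 ^ N =
      (δ : K)⁻¹ * ∑ j ∈ range δ, ζ ^ (k * j) * ((1 + ζ ^ j) / 2) ^ N := by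
  have hδK : (δ : K) ≠ 0 := by exact_mod_cast hδ.ne'
  calc ∑ t ∈ range (N + 1) with δ ∣ k + t, (N.choose t : K) / 2 ^ N
      = ∑ t ∈ range (N + 1), (δ : K)⁻¹ * ∑ j ∈ range δ,
          (N.choose t : K) / 2 ^ N * ζ ^ ((k + t) * j) := by
        rw [sum_filter]
        refine sum_congr rfl fun t _ => ?_
        rw [← mul_sum, hζ.sum_pow_mul_eq_ite]
        split_ifs
        · field_simp
        · simp
    _ = (δ : K)⁻¹ * ∑ j ∈ range δ, ζ ^ (k * j) *
          ∑ t ∈ range (N + 1), (ζ ^ j) ^ t * 1 ^ (N - t) * N.choose t / 2 ^ N := by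
        rw [← mul_sum, sum_comm]
        refine congrArg _ (sum_congr rfl fun j _ => ?_)
        rw [mul_sum]
        refine sum_congr rfl fun t _ => ?_
        rw [add_mul, pow_add, ← pow_mul, mul_comm t j, one_pow]
        ring
    _ = _ := by
        simp_rw [← sum_div, ← add_pow, div_pow, add_comm (ζ ^ _)]

theorem norm_one_add_exp_two_mul_I (θ : ℝ) :
    ‖1 + Complex.exp (2 * θ * Complex.I)‖ = 2 * |cos θ| := by
  have hfactor : 1 + Complex.exp (2 * θ * Complex.I) =
      Complex.exp (θ * Complex.I) * (2 * Complex.cos θ) := by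
    rw [Complex.two_cos, mul_add, ← Complex.exp_add, ← Complex.exp_add]
    ring_nf
    rw [Complex.exp_zero, add_comm]
  rw [hfactor, norm_mul, Complex.norm_exp_ofReal_mul_I, one_mul, norm_mul, ← Complex.ofReal_cos,
    Complex.norm_real, Real.norm_eq_abs, Complex.norm_two]

theorem abs_cos_le_cos {x θ : ℝ} (hx : 0 ≤ x) (hxθ : x ≤ θ) (hθ : θ ≤ π - x) :
    |cos θ| ≤ cos x := by
  rw [abs_le, neg_le, ← cos_pi_sub]
  exact ⟨cos_le_cos_of_nonneg_of_le_pi hx (by linarith) (by linarith),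
    cos_le_cos_of_nonneg_of_le_pi hx (by linarith) hxθ⟩

theorem norm_one_add_exp_pow_div_two_le {δ j : ℕ} (hj : j ∈ Ico 1 δ) :
    ‖(1 + Complex.exp (2 * π * Complex.I / δ) ^ j) / 2‖ ≤ cos (π / δ) := by
  obtain ⟨hj1, hjδ⟩ := mem_Ico.1 hj
  have hδ : (0 : ℝ) < δ := by exact_mod_cast (show 0 < δ by omega)
  have hj1' : (1 : ℝ) ≤ j := by exact_mod_cast hj1
  have hjδ' : (j : ℝ) + 1 ≤ δ := by exact_mod_cast hjδ
  have hpow : Complex.exp (2 * π * Complex.I / δ) ^ j =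
      Complex.exp (2 * (π * j / δ : ℝ) * Complex.I) := by
    rw [← Complex.exp_nat_mul]; push_cast; ring_nf
  rw [hpow, norm_div, norm_one_add_exp_two_mul_I, Complex.norm_two,
    mul_div_cancel_left₀ _ two_ne_zero]
  refine abs_cos_le_cos (by positivity) ?_ ?_
  · gcongr; exact le_mul_of_one_le_right pi_pos.le hj1'
  · rw [le_sub_iff_add_le, ← add_div, div_le_iff₀ hδ]; nlinarith [pi_pos]

/-- The factor `1 - δ⁻¹` makes the bound vanish for `δ = 1`, where `cos (π / δ) = -1`. -/
theorem abs_sum_choose_filter_dvd_sub_inv_le (N k δ : ℕ) (hδ : 0 < δ) :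
    |∑ t ∈ range (N + 1) with δ ∣ k + t, (N.choose t : ℝ) / 2 ^ N - (δ : ℝ)⁻¹| ≤
      (1 - (δ : ℝ)⁻¹) * cos (π / δ) ^ N := by
  set ζ := Complex.exp (2 * π * Complex.I / δ)
  have hζ : IsPrimitiveRoot ζ δ := Complex.isPrimitiveRoot_exp δ hδ.ne'
  -- the term `j = 0` of the expansion is exactly `1`
  have hexpand : ((∑ t ∈ range (N + 1) with δ ∣ k + t, (N.choose t : ℝ) / 2 ^ N
      - (δ : ℝ)⁻¹ : ℝ) : ℂ) =
      (δ : ℂ)⁻¹ * ∑ j ∈ Ico 1 δ, ζ ^ (k * j) * ((1 + ζ ^ j) / 2) ^ N := by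
    push_cast
    rw [sum_choose_filter_dvd_eq hζ hδ, range_eq_Ico, sum_eq_sum_Ico_succ_bot hδ]
    ring_nf
  have hterm : ∀ j ∈ Ico 1 δ, ‖ζ ^ (k * j) * ((1 + ζ ^ j) / 2) ^ N‖ ≤ cos (π / δ) ^ N :=
    fun j hj => by
      rw [norm_mul, norm_pow, hζ.norm'_eq_one hδ.ne', one_pow, one_mul, norm_pow]
      exact pow_le_pow_left₀ (norm_nonneg _) (norm_one_add_exp_pow_div_two_le hj) N
  calc _ = ‖(δ : ℂ)⁻¹ * ∑ j ∈ Ico 1 δ, ζ ^ (k * j) * ((1 + ζ ^ j) / 2) ^ N‖ := by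
        rw [← hexpand, Complex.norm_real, Real.norm_eq_abs]
    _ ≤ (δ : ℝ)⁻¹ * ∑ j ∈ Ico 1 δ, cos (π / δ) ^ N := by
        rw [norm_mul, norm_inv, Complex.norm_natCast]
        gcongr
        exact (norm_sum_le _ _).trans (sum_le_sum hterm)
    _ = (1 - (δ : ℝ)⁻¹) * cos (π / δ) ^ N := by
        rw [sum_const, Nat.card_Ico, nsmul_eq_mul, Nat.cast_sub hδ, Nat.cast_one]
        field_simp

end RootsOfUnity

theorem abs_measureReal_dvd_add_sub_inv_le {Ω : Type*} [MeasurableSpace Ω] {P : Measure Ω}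
    [IsFiniteMeasure P] {T : Ω → ℕ} (hT : Measurable T) {N : ℕ}
    (hlaw : ∀ t, P.real {ω | T ω = t} = N.choose t / 2 ^ N) {δ : ℕ} (hδ : 0 < δ) (k : ℕ) :
    |P.real {ω | δ ∣ k + T ω} - (δ : ℝ)⁻¹| ≤ (1 - (δ : ℝ)⁻¹) * cos (π / δ) ^ N := by
  have hsupp : ∀ t, N < t → P.real {ω | T ω = t} = 0 := fun t ht => by
    simp [hlaw, Nat.choose_eq_zero_of_lt ht]
  rw [measureReal_setOf_eq_sum hT hsupp (fun t => δ ∣ k + t)]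
  simpa only [hlaw] using abs_sum_choose_filter_dvd_sub_inv_le N k δ hδ

theorem abs_measureReal_dvd_sum_range_sub_le {Ω : Type*} [MeasurableSpace Ω] {P : Measure Ω}
    [IsProbabilityMeasure P] {b : ℕ → Ω → ℕ} (hmeas : ∀ i, Measurable (b i))
    (hindep : iIndepFun b P)
    (h0 : ∀ i, P {ω | b i ω = 0} = 1 / 2) (h1 : ∀ i, P {ω | b i ω = 1} = 1 / 2)
    {n m : ℕ} (hnm : n ≤ m) (d : ℕ) {δ : ℕ} (hδ : 0 < δ) :
    |P.real {ω | d ∣ ∑ i ∈ range n, b i ω ∧ δ ∣ ∑ i ∈ range m, b i ω}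
      - P.real {ω | d ∣ ∑ i ∈ range n, b i ω} * P.real {ω | δ ∣ ∑ i ∈ range m, b i ω}| ≤
      2 * ((1 - (δ : ℝ)⁻¹) * cos (π / δ) ^ (m - n)) := by
  have hlaw := measureReal_sum_eq_choose hmeas hindep h0 h1
  have hsum_meas : ∀ s : Finset ℕ, Measurable fun ω => ∑ i ∈ s, b i ω := fun s =>
    Finset.measurable_sum s fun i _ => hmeas i
  have hsupp : ∀ k, n < k → P.real {ω | ∑ i ∈ range n, b i ω = k} = 0 := fun k hk => by
    simpa [Nat.choose_eq_zero_of_lt hk] using hlaw (range n) k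
  have hfourier := abs_measureReal_dvd_add_sub_inv_le (hsum_meas (Ico n m))
    (by simpa using hlaw (Ico n m)) hδ
  have hblocks := hindep.indepFun_finsetSum_finsetSum hmeas
    (range_eq_Ico n ▸ Ico_disjoint_Ico_consecutive 0 n m)
  simp only [← sum_range_add_sum_Ico _ hnm]
  exact abs_measureReal_inter_sub_mul_le (hsum_meas _) (hsum_meas _) hblocks hsupp
    (d ∣ ·) (δ ∣ ·) hfourier

section Estimates

theorem cos_le_one_sub_sq_div_four {x : ℝ} (hx0 : 0 ≤ x) (hx : x ≤ π / 2) :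
    cos x ≤ 1 - x ^ 2 / 4 := by
  have hy : (x / 2) ^ 2 ≤ 1 := by nlinarith [pi_le_four]
  have hsin : x / 2 * (5 / 6) ≤ sin (x / 2) := by
    nlinarith [sin_ge_sub_cube (by positivity : 0 ≤ x / 2)]
  have hsq : (x / 2) ^ 2 / 2 ≤ sin (x / 2) ^ 2 := by
    nlinarith [pow_le_pow_left₀ (by positivity) hsin 2]
  have hhalf : sin (x / 2) ^ 2 = 1 / 2 - cos x / 2 := by
    rw [sin_sq_eq_half_sub, mul_div_cancel₀ x two_ne_zero]
  nlinarith

theorem one_sub_inv_mul_cos_pi_div_pow_le (N : ℕ) {δ : ℕ} (hδ : 0 < δ) :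
    (1 - (δ : ℝ)⁻¹) * cos (π / δ) ^ N ≤ exp (-(N * (π / δ) ^ 2 / 4)) := by
  rcases (Nat.one_le_iff_ne_zero.2 hδ.ne').eq_or_lt with rfl | hδ2
  · simp [(exp_pos _).le]
  have hδR : (2 : ℝ) ≤ δ := by exact_mod_cast hδ2
  have hx0 : 0 ≤ π / δ := by positivity
  have hx : π / δ ≤ π / 2 := div_le_div_of_nonneg_left pi_pos.le two_pos hδR
  have hcos0 : 0 ≤ cos (π / δ) := cos_nonneg_of_mem_Icc ⟨by linarith [pi_pos], hx⟩
  calc (1 - (δ : ℝ)⁻¹) * cos (π / δ) ^ N ≤ 1 * exp (-((π / δ) ^ 2 / 4)) ^ N := by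
        gcongr
        · exact sub_le_self _ (by positivity)
        · exact (cos_le_one_sub_sq_div_four hx0 hx).trans
            (by linarith [add_one_le_exp (-((π / δ) ^ 2 / 4))])
    _ = exp (-(N * (π / δ) ^ 2 / 4)) := by rw [one_mul, ← exp_nat_mul]; ring_nf

theorem exp_neg_le_rpow_neg {α δ₀ : ℝ} {δ N m : ℕ} (hα : 0 < α) (hδ₀ : √2 < δ₀) (hm : 1 < m)
    (hmN : m ≤ 2 * N) (hδ : 0 < δ)
    (hδlt : (δ : ℝ) < π / (δ₀ * √(2 * α)) * √(m / log m)) :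
    exp (-(N * (π / δ) ^ 2 / 4)) ≤ (m : ℝ) ^ (-(α / 2)) := by
  have hm0 : (0 : ℝ) < m := by positivity
  have hlog : 0 < log m := log_pos (by exact_mod_cast hm)
  have hδ₀0 : 0 < δ₀ := (sqrt_nonneg 2).trans_lt hδ₀
  have hδ₀sq : 2 < δ₀ ^ 2 := (sqrt_lt' hδ₀0).1 hδ₀
  have hδR : (0 : ℝ) < δ := by exact_mod_cast hδ
  have hmN' : (m : ℝ) ≤ 2 * N := by exact_mod_cast hmN
  have hsq : (δ : ℝ) ^ 2 * δ₀ ^ 2 * (2 * α) * log m < π ^ 2 * m := by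
    rw [div_mul_eq_mul_div, lt_div_iff₀ (by positivity)] at hδlt
    have h := pow_lt_pow_left₀ hδlt (by positivity) two_ne_zero
    rw [mul_pow, mul_pow, mul_pow, sq_sqrt (by positivity), sq_sqrt (by positivity),
      mul_div_assoc', lt_div_iff₀ hlog] at h
    linarith
  have hkey : α / 2 * log m ≤ N * (π / δ) ^ 2 / 4 := by
    rw [div_pow, le_div_iff₀ four_pos, mul_div_assoc', le_div_iff₀ (by positivity)]
    nlinarith [mul_pos (mul_pos (pow_pos hδR 2) hα) hlog]
  rw [rpow_def_of_pos hm0, exp_le_exp]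
  linarith

theorem rpow_neg_le_mul_rpow_mul_rpow {c α : ℝ} {n N m : ℕ} (hc : 0 < c) (hα : 1 ≤ α)
    (hcα : 1 / c ≤ α) (hn : 3 ≤ n) (hN : 3 ≤ N) (hnm : n ≤ m) (hNm : N ≤ m) :
    (m : ℝ) ^ (-(α / 2)) ≤ n * (log n / n) ^ (1 / (2 * c)) * (log N / N) ^ ((1 : ℝ) / 2) := by
  have hinv_le : ∀ {x : ℕ}, 3 ≤ x → (x : ℝ)⁻¹ ≤ log x / x := fun {x} hx => by
    have hlog : 1 ≤ log (x : ℝ) := (le_log_iff_exp_le (by positivity)).2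
      (exp_one_lt_three.le.trans (by exact_mod_cast hx))
    rw [inv_eq_one_div]; gcongr
  have hn0 : (0 : ℝ) < n := by positivity
  have hN0 : (0 : ℝ) < N := by positivity
  have hnm' : (n : ℝ) ≤ m := by exact_mod_cast hnm
  have hNm' : (N : ℝ) ≤ m := by exact_mod_cast hNm
  calc (m : ℝ) ^ (-(α / 2)) = (m : ℝ) ^ (-((α - 1) / 2)) * (m : ℝ) ^ (-(1 / 2 : ℝ)) := by
        rw [← rpow_add (hn0.trans_le hnm')]; ring_nf
    _ ≤ (n : ℝ) ^ (-((α - 1) / 2)) * (N : ℝ) ^ (-(1 / 2 : ℝ)) :=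
        mul_le_mul (rpow_le_rpow_of_nonpos hn0 hnm' (by linarith))
          (rpow_le_rpow_of_nonpos hN0 hNm' (by norm_num)) (by positivity) (by positivity)
    _ ≤ (n : ℝ) ^ (1 - 1 / (2 * c)) * (N : ℝ) ^ (-(1 / 2 : ℝ)) := by
        gcongr
        · exact_mod_cast (by omega : 1 ≤ n)
        · linarith [show 1 / (2 * c) = 1 / c / 2 by ring]
    _ = n * (n : ℝ)⁻¹ ^ (1 / (2 * c)) * (N : ℝ)⁻¹ ^ ((1 : ℝ) / 2) := by
        rw [rpow_sub hn0, rpow_one, inv_rpow hn0.le, inv_rpow hN0.le, rpow_neg hN0.le,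
          div_eq_mul_inv]
    _ ≤ _ := by gcongr <;> exact hinv_le ‹_›

end Estimates

theorem correlation_bound_weakly_dependent_far_general
    {Ω : Type*} [MeasurableSpace Ω] (P : Measure Ω) [IsProbabilityMeasure P]
    (b : ℕ → Ω → ℕ) (hmeas : ∀ i, Measurable (b i))
    (hindep : iIndepFun b P)
    (h0 : ∀ i, P {ω | b i ω = 0} = 1/2) (h1 : ∀ i, P {ω | b i ω = 1} = 1/2)
    (B : ℕ → Ω → ℕ) (hB : ∀ n ω, B n ω = ∑ i ∈ Finset.range n, b (i + 1) ω)
    -- the correlation function `Δ((d,n),(δ,m))`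
    (Δ : ℕ → ℕ → ℕ → ℕ → ℝ)
    (hΔ : ∀ d δ n m, Δ d n δ m =
      (P {ω | d ∣ B n ω ∧ δ ∣ B m ω}).toReal
        - (P {ω | d ∣ B n ω}).toReal * (P {ω | δ ∣ B m ω}).toReal)
    (c α α' δ₀ : ℝ) (hc0 : 0 < c)
    (hα' : max (3/2) (1/c) < α') (hαα' : α' < α) (hδ₀ : Real.sqrt 2 < δ₀) :
    ∃ (C : ℝ) (n₀ : ℕ), ∀ n m : ℕ, n₀ ≤ n → 2 * n ≤ m →
      ∀ d δ : ℕ, 0 < d → 0 < δ →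
        (d : ℝ) < Real.pi / Real.sqrt (2 * α) * Real.sqrt ((n : ℝ) / Real.log n) →
        (δ : ℝ) < Real.pi / (δ₀ * Real.sqrt (2 * α)) * Real.sqrt ((m : ℝ) / Real.log m) →
        |Δ d n δ m| ≤
          C * (n : ℝ) * (Real.log n / (n : ℝ)) ^ (1 / (2 * c))
            * (Real.log ((m - n : ℕ) : ℝ) / ((m - n : ℕ) : ℝ)) ^ ((1:ℝ)/2) := by
  refine ⟨2, 3, fun n m hn hm d δ _ hδ _ hδlt => ?_⟩
  have hα : 3 / 2 < α := ((le_max_left _ _).trans_lt hα').trans hαα'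
  have hcα : 1 / c < α := ((le_max_right _ _).trans_lt hα').trans hαα'
  have hcorr := abs_measureReal_dvd_sum_range_sub_le (fun i => hmeas (i + 1))
    (hindep.precomp (add_left_injective 1)) (fun i => h0 (i + 1)) (fun i => h1 (i + 1))
    (by omega : n ≤ m) d hδ
  calc |Δ d n δ m| ≤ 2 * ((1 - (δ : ℝ)⁻¹) * cos (π / δ) ^ (m - n)) := by
        simpa only [hΔ, hB, ← measureReal_def] using hcorr
    _ ≤ 2 * exp (-((m - n : ℕ) * (π / δ) ^ 2 / 4)) := by
        gcongr; exact one_sub_inv_mul_cos_pi_div_pow_le _ hδ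
    _ ≤ 2 * (m : ℝ) ^ (-(α / 2)) := by
        gcongr; exact exp_neg_le_rpow_neg (by linarith) hδ₀ (by omega) (by omega) hδ hδlt
    _ ≤ 2 * (n * (log n / n) ^ (1 / (2 * c))
          * (log (m - n : ℕ) / (m - n : ℕ)) ^ ((1 : ℝ) / 2)) := by
        gcongr
        exact rpow_neg_le_mul_rpow_mul_rpow hc0 (by linarith) hcα.le hn (by omega) (by omega)
          (by omega)
    _ = _ := by ring

/-- Proposition 2.9, uniform correlation bound in the weakly dependent
case `m ≥ 2n`. -/
theorem correlation_bound_weakly_dependent_far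
    {Ω : Type*} [MeasurableSpace Ω] (P : Measure Ω) [IsProbabilityMeasure P]
    (b : ℕ → Ω → ℕ) (hmeas : ∀ i, Measurable (b i))
    (hindep : iIndepFun b P)
    (h0 : ∀ i, P {ω | b i ω = 0} = 1/2) (h1 : ∀ i, P {ω | b i ω = 1} = 1/2)
    (B : ℕ → Ω → ℕ) (hB : ∀ n ω, B n ω = ∑ i ∈ Finset.range n, b (i + 1) ω)
    -- the correlation function `Δ((d,n),(δ,m))`
    (Δ : ℕ → ℕ → ℕ → ℕ → ℝ)
    (hΔ : ∀ d δ n m, Δ d n δ m =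
      (P {ω | d ∣ B n ω ∧ δ ∣ B m ω}).toReal
        - (P {ω | d ∣ B n ω}).toReal * (P {ω | δ ∣ B m ω}).toReal)
    (c α α' δ₀ : ℝ) (hc0 : 0 < c) (hc1 : c < 1)
    (hα' : max (3/2) (1/c) < α') (hαα' : α' < α) (hδ₀ : Real.sqrt 2 < δ₀) :
    ∃ (C : ℝ) (n₀ : ℕ), ∀ n m : ℕ, n₀ ≤ n → 2 * n ≤ m →
      ∀ d δ : ℕ, 0 < d → 0 < δ →
        (d : ℝ) < Real.pi / Real.sqrt (2 * α) * Real.sqrt ((n : ℝ) / Real.log n) →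
        (δ : ℝ) < Real.pi / (δ₀ * Real.sqrt (2 * α)) * Real.sqrt ((m : ℝ) / Real.log m) →
        |Δ d n δ m| ≤
          C * (n : ℝ) * (Real.log n / (n : ℝ)) ^ (1 / (2 * c))
            * (Real.log ((m - n : ℕ) : ℝ) / ((m - n : ℕ) : ℝ)) ^ ((1:ℝ)/2) :=
  correlation_bound_weakly_dependent_far_general P b hmeas hindep h0 h1 B hB Δ hΔ c α α' δ₀ hc0 hα'
    hαα' hδ₀
end

section
/- For all positive integers $D$ and all integers $m\ge n\ge 1$, the probability that $D$ divides the product $B_nB_m$ satisfies $\mathbf P\{D\mid B_nB_m\} = \frac{1}{2^{n}2^{m-n}}\sum_{k=0}^{m-n}\binom{m-n}{k}\,\frac1D\sum_{j=0}^{D-1}\sum_{h=0}^{n}\binom{n}{h}\, e^{2i\pi\frac{j}{D}(h^2+kh)}$. -/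
open MeasureTheory ProbabilityTheory Finset Real

/-!
Almost surely every `b i` is `0` or `1`, so `B n = #(S ∩ [1, n])` and `B m = #S`, where
`S ⊆ [1, m]` is the random set of indices `i` with `b i = 1`; by independence `S` is uniformly
distributed on the `2 ^ m` subsets of `[1, m]`. Counting subsets by `h = #(S ∩ [1, n])` and
`k = #(S \ [1, n])` gives `2⁻ᵐ ∑ C(n, h) C(m - n, k) [D ∣ h (h + k)]`, and the indicator of
`D ∣ a` is the root-of-unity average `D⁻¹ ∑_{j < D} exp (2πi j a / D)`.
-/

open Complex in
theorem one_div_mul_sum_range_exp_eq_ite {D : ℕ} (hD : D ≠ 0) (a : ℕ) :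
    1 / (D : ℂ) * ∑ j ∈ range D, exp (2 * π * I * j / D * a) = if D ∣ a then 1 else 0 := by
  have hζ := isPrimitiveRoot_exp D hD
  have hterm (j : ℕ) : exp (2 * π * I * j / D * a) = (exp (2 * π * I / D) ^ a) ^ j := by
    rw [← pow_mul, ← Complex.exp_nat_mul]
    push_cast
    ring_nf
  simp only [hterm]
  split_ifs with hdvd
  · simp [(hζ.pow_eq_one_iff_dvd a).2 hdvd, hD]
  · have hne : exp (2 * π * I / D) ^ a ≠ 1 := mt (hζ.pow_eq_one_iff_dvd a).1 hdvd
    rw [geom_sum_eq hne, pow_right_comm, hζ.pow_eq_one, one_pow, sub_self, zero_div, mul_zero]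

open Complex in
theorem one_div_mul_sum_range_sum_exp_eq_sum_ite {ι : Type*} {D : ℕ} (hD : D ≠ 0)
    (s : Finset ι) (c : ι → ℂ) (a : ι → ℕ) :
    1 / (D : ℂ) * ∑ j ∈ range D, ∑ i ∈ s, c i * exp (2 * π * I * j / D * a i)
      = ∑ i ∈ s, c i * if D ∣ a i then 1 else 0 := by
  simp only [sum_comm (s := range D), mul_sum, ← one_div_mul_sum_range_exp_eq_ite hD]
  ring_nf

theorem Finset.sum_powerset_eq_sum_choose_mul_choose {α M : Type*} [DecidableEq α]
    [AddCommMonoid M] {s u : Finset α} (hsu : s ⊆ u) (f : ℕ → ℕ → M) :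
    ∑ S ∈ u.powerset, f #(S ∩ s) #(S \ s)
      = ∑ h ∈ range (#s + 1), ∑ k ∈ range (#(u \ s) + 1),
          ((#s).choose h * (#(u \ s)).choose k) • f h k := by
  have hsplit : ∑ S ∈ u.powerset, f #(S ∩ s) #(S \ s)
      = ∑ A ∈ s.powerset, ∑ C ∈ (u \ s).powerset, f #A #C := by
    rw [← sum_product']
    refine sum_nbij' (fun S ↦ (S ∩ s, S \ s)) (fun p ↦ p.1 ∪ p.2) ?_ ?_ ?_ ?_ fun _ _ ↦ rfl <;>
      intro x hx <;> simp only [mem_product, mem_powerset, Prod.ext_iff] at hx ⊢ <;> grind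
  rw [hsplit, sum_powerset_apply_card (fun h ↦ ∑ C ∈ (u \ s).powerset, f h #C)]
  refine sum_congr rfl fun h _ ↦ ?_
  rw [sum_powerset_apply_card, smul_sum]
  simp only [mul_smul]

theorem Finset.card_filter_powerset_dvd_card_inter_mul_card {α : Type*} [DecidableEq α]
    {s u : Finset α} (hsu : s ⊆ u) (D : ℕ) :
    #{S ∈ u.powerset | D ∣ #(S ∩ s) * #S}
      = ∑ h ∈ range (#s + 1), ∑ k ∈ range (#(u \ s) + 1),
          (#s).choose h * (#(u \ s)).choose k * if D ∣ h * (h + k) then 1 else 0 := by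
  rw [card_filter]
  convert sum_powerset_eq_sum_choose_mul_choose hsu
    (fun h k ↦ if D ∣ h * (h + k) then 1 else 0) using 1
  · exact sum_congr rfl fun S _ ↦ by rw [← card_inter_add_card_sdiff S s]
  · simp only [smul_eq_mul]

def heads {Ω : Type*} (b : ℕ → Ω → ℕ) (s : Finset ℕ) (ω : Ω) : Finset ℕ := {i ∈ s | b i ω = 1}

theorem heads_preimage_singleton {Ω : Type*} {b : ℕ → Ω → ℕ} {s S : Finset ℕ} (hS : S ⊆ s) :
    heads b s ⁻¹' {S} = ⋂ i ∈ s, b i ⁻¹' (if i ∈ S then {1} else {1}ᶜ) := by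
  ext ω
  simp only [heads, Set.mem_preimage, Set.mem_singleton_iff, Set.mem_iInter]
  constructor
  · rintro rfl i hi
    by_cases h : b i ω = 1 <;> simp [hi, h]
  · intro h
    ext i
    by_cases hi : i ∈ s
    · specialize h i hi
      split_ifs at h with hiS <;> simp_all
    · simp [hi, mt (@hS i) hi]

theorem sum_range_add_one_eq_card_heads {Ω : Type*} {b : ℕ → Ω → ℕ} {ω : Ω}
    (hb : ∀ i, b i ω ≤ 1) (n : ℕ) : ∑ i ∈ range n, b (i + 1) ω = #(heads b (Icc 1 n) ω) := by
  rw [heads, card_filter, range_eq_Ico, sum_Ico_add' (fun i ↦ b i ω), zero_add,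
    ← Order.succ_eq_add_one, Ico_succ_right_eq_Icc]
  refine sum_congr rfl fun i _ ↦ ?_
  have := hb i
  split_ifs <;> omega

section Bernoulli

variable {Ω : Type*} [MeasurableSpace Ω] {P : Measure Ω} [IsProbabilityMeasure P] {b : ℕ → Ω → ℕ}

theorem measure_heads_preimage_singleton (hmeas : ∀ i, Measurable (b i)) (hindep : iIndepFun b P)
    (h1 : ∀ i, P {ω | b i ω = 1} = 1 / 2) {s S : Finset ℕ} (hS : S ⊆ s) :
    P (heads b s ⁻¹' {S}) = 2⁻¹ ^ #s := by
  have hhalf (i : ℕ) : P (b i ⁻¹' (if i ∈ S then {1} else {1}ᶜ)) = 2⁻¹ := by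
    split_ifs
    · exact (h1 i).trans (one_div 2)
    · rw [Set.preimage_compl, prob_compl_eq_one_sub (hmeas i (measurableSet_singleton 1))]
      change 1 - P {ω | b i ω = 1} = 2⁻¹
      rw [h1, one_div, ENNReal.one_sub_inv_two]
  rw [heads_preimage_singleton hS, hindep.measure_inter_preimage_eq_mul s
    fun i _ ↦ .of_discrete, prod_congr rfl fun i _ ↦ hhalf i, prod_const]

theorem measure_heads_preimage (hmeas : ∀ i, Measurable (b i)) (hindep : iIndepFun b P)
    (h1 : ∀ i, P {ω | b i ω = 1} = 1 / 2) {s : Finset ℕ} {𝒜 : Finset (Finset ℕ)}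
    (h𝒜 : 𝒜 ⊆ s.powerset) :
    P (heads b s ⁻¹' 𝒜) = #𝒜 * 2⁻¹ ^ #s := by
  have hsub {S} (hS : S ∈ 𝒜) : S ⊆ s := mem_powerset.1 (h𝒜 hS)
  rw [← sum_measure_preimage_singleton 𝒜 fun S hS ↦ ?_, sum_congr rfl fun S hS ↦
    measure_heads_preimage_singleton hmeas hindep h1 (hsub hS), sum_const, nsmul_eq_mul]
  rw [heads_preimage_singleton (hsub hS)]
  exact .biInter s.countable_toSet fun i _ ↦ hmeas i .of_discrete

theorem ae_forall_le_one (hmeas : ∀ i, Measurable (b i)) (h0 : ∀ i, P {ω | b i ω = 0} = 1 / 2)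
    (h1 : ∀ i, P {ω | b i ω = 1} = 1 / 2) : ∀ᵐ ω ∂P, ∀ i, b i ω ≤ 1 := by
  refine ae_all_iff.2 fun i ↦ ?_
  have hmeas1 : MeasurableSet {ω | b i ω = 1} := hmeas i (measurableSet_singleton 1)
  have h01 : ∀ᵐ ω ∂P, b i ω = 0 ∨ b i ω = 1 := by
    rw [ae_iff_prob_eq_one (by fun_prop), Set.ofPred_or, measure_union ?_ hmeas1, h0, h1,
      ENNReal.add_halves]
    exact Set.disjoint_left.2 fun ω h0 h1 ↦ by simp_all
  filter_upwards [h01] with ω hω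
  omega

theorem measure_dvd_mul_eq_card (hmeas : ∀ i, Measurable (b i)) (hindep : iIndepFun b P)
    (h0 : ∀ i, P {ω | b i ω = 0} = 1 / 2) (h1 : ∀ i, P {ω | b i ω = 1} = 1 / 2)
    {B : ℕ → Ω → ℕ} (hB : ∀ n ω, B n ω = ∑ i ∈ range n, b (i + 1) ω) (D : ℕ) {n m : ℕ}
    (hnm : n ≤ m) :
    P {ω | D ∣ B n ω * B m ω} = #{S ∈ (Icc 1 m).powerset | D ∣ #(S ∩ Icc 1 n) * #S} * 2⁻¹ ^ m := by
  set 𝒜 : Finset (Finset ℕ) := {S ∈ (Icc 1 m).powerset | D ∣ #(S ∩ Icc 1 n) * #S}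
  have hevent : {ω | D ∣ B n ω * B m ω} =ᵐ[P] heads b (Icc 1 m) ⁻¹' 𝒜 := by
    filter_upwards [ae_forall_le_one hmeas h0 h1] with ω hω
    have hheads : heads b (Icc 1 n) ω = heads b (Icc 1 m) ω ∩ Icc 1 n := by
      rw [heads, heads, filter_inter, inter_eq_right.2 (Icc_subset_Icc_right hnm)]
    change (D ∣ B n ω * B m ω) = (heads b (Icc 1 m) ω ∈ 𝒜)
    rw [hB, hB, sum_range_add_one_eq_card_heads hω, sum_range_add_one_eq_card_heads hω, hheads,
      mem_filter, mem_powerset, eq_iff_iff]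
    exact (and_iff_right (filter_subset _ _)).symm
  rw [measure_congr hevent, measure_heads_preimage hmeas hindep h1 (filter_subset _ _),
    Nat.card_Icc, Nat.add_sub_cancel]

end Bernoulli

theorem prob_dvd_product_bernoulli_sums_general
    {Ω : Type*} [MeasurableSpace Ω] (P : Measure Ω) [IsProbabilityMeasure P]
    (b : ℕ → Ω → ℕ) (hmeas : ∀ i, Measurable (b i))
    (hindep : iIndepFun b P)
    (h0 : ∀ i, P {ω | b i ω = 0} = 1/2) (h1 : ∀ i, P {ω | b i ω = 1} = 1/2)
    (B : ℕ → Ω → ℕ) (hB : ∀ n ω, B n ω = ∑ i ∈ Finset.range n, b (i + 1) ω)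
    (D n m : ℕ) (hD : 0 < D) (hnm : n ≤ m) :
    ((P {ω | D ∣ B n ω * B m ω}).toReal : ℂ)
      = (1 / ((2 : ℂ) ^ n * (2 : ℂ) ^ (m - n))) *
          ∑ k ∈ Finset.range (m - n + 1), ((m - n).choose k : ℂ) *
            ((1 / (D : ℂ)) * ∑ j ∈ Finset.range D, ∑ h ∈ Finset.range (n + 1),
              (n.choose h : ℂ) *
                Complex.exp (2 * Real.pi * Complex.I * (j : ℂ) / (D : ℂ)
                  * ((h : ℂ) ^ 2 + (k : ℂ) * (h : ℂ)))) := by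
  have hsu : Icc 1 n ⊆ Icc 1 m := Icc_subset_Icc_right hnm
  have hexponent (h k : ℕ) : (h : ℂ) ^ 2 + k * h = ((h * (h + k) : ℕ) : ℂ) := by push_cast; ring
  simp only [hexponent, one_div_mul_sum_range_sum_exp_eq_sum_ite hD.ne']
  rw [measure_dvd_mul_eq_card hmeas hindep h0 h1 hB D hnm,
    card_filter_powerset_dvd_card_inter_mul_card hsu, card_sdiff_of_subset hsu, Nat.card_Icc,
    Nat.card_Icc, Nat.add_sub_cancel, Nat.add_sub_cancel, ← pow_add, Nat.add_sub_cancel' hnm,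
    sum_comm]
  simp only [ENNReal.toReal_mul, ENNReal.toReal_pow, ENNReal.toReal_inv, ENNReal.toReal_natCast,
    ENNReal.toReal_ofNat, Complex.ofReal_mul, Complex.ofReal_pow, Complex.ofReal_inv,
    Complex.ofReal_natCast, Complex.ofReal_ofNat]
  push_cast
  simp only [mul_sum, sum_mul]
  refine sum_congr rfl fun k _ ↦ sum_congr rfl fun h _ ↦ ?_
  -- `Complex.ofReal_inv` produces `Complex.instInv`, which `ring` does not match with `1 / _`
  rw [one_div, ← inv_pow]
  ring

/-- formula (2.28) for the probability that `D` divides `B_n · B_m`. -/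
theorem prob_dvd_product_bernoulli_sums
    {Ω : Type*} [MeasurableSpace Ω] (P : Measure Ω) [IsProbabilityMeasure P]
    (b : ℕ → Ω → ℕ) (hmeas : ∀ i, Measurable (b i))
    (hindep : iIndepFun b P)
    (h0 : ∀ i, P {ω | b i ω = 0} = 1/2) (h1 : ∀ i, P {ω | b i ω = 1} = 1/2)
    (B : ℕ → Ω → ℕ) (hB : ∀ n ω, B n ω = ∑ i ∈ Finset.range n, b (i + 1) ω)
    (D n m : ℕ) (hD : 0 < D) (hn : 1 ≤ n) (hnm : n ≤ m) :
    ((P {ω | D ∣ B n ω * B m ω}).toReal : ℂ)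
      = (1 / ((2 : ℂ) ^ n * (2 : ℂ) ^ (m - n))) *
          ∑ k ∈ Finset.range (m - n + 1), ((m - n).choose k : ℂ) *
            ((1 / (D : ℂ)) * ∑ j ∈ Finset.range D, ∑ h ∈ Finset.range (n + 1),
              (n.choose h : ℂ) *
                Complex.exp (2 * Real.pi * Complex.I * (j : ℂ) / (D : ℂ)
                  * ((h : ℂ) ^ 2 + (k : ℂ) * (h : ℂ)))) :=
  prob_dvd_product_bernoulli_sums_general P b hmeas hindep h0 h1 B hB D n m hD hnm
end

section
/- There exists an absolute constant $C$ such that for every sequence $\{a_k,\ k\ge0\}$ of real numbers and every positive integer $n$, $\Big|\sum_{h=0}^{n} 2^{-n}\binom{n}{h}\, a_h\Big| \le \frac{C}{\sqrt n}\,\max_{0\le \ell\le n}\big|A_\ell\big|$, where $A_\ell=\sum_{k=0}^{\ell} a_k$. -/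
open Finset Real

/-
Abel summation bounds `∑ w_h a_h` by `max |A_ℓ|` times `|w_n|` plus the total variation of the
weights `w_h = choose n h / 2 ^ n`. These weights increase up to `h = n / 2`
and decrease afterwards, so their variation is at most twice the central weight, and
`centralBinom m ^ 2 * (2 m + 1) ≤ 16 ^ m` makes that weight at most `1 / √n`.
-/
theorem sum_range_abs_sub_of_monotoneOn_of_antitoneOn {α : Type*} [AddCommGroup α] [LinearOrder α]
    [IsOrderedAddMonoid α] {f : ℕ → α} {m n : ℕ} (hmn : m ≤ n)
    (hmono : MonotoneOn f (Set.Iic m)) (hanti : AntitoneOn f (Set.Ici m)) :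
    ∑ i ∈ range n, |f (i + 1) - f i| = 2 • f m - f 0 - f n := by
  have hup : ∑ i ∈ range m, |f (i + 1) - f i| = f m - f 0 := by
    rw [← sum_range_sub]
    refine sum_congr rfl fun i hi => abs_of_nonneg (sub_nonneg.2 ?_)
    have hi : i + 1 ≤ m := mem_range.1 hi
    exact hmono (by simp; omega) (by simpa using hi) (by omega)
  have hdown : ∑ i ∈ Ico m n, |f (i + 1) - f i| = f m - f n := by
    rw [← neg_sub, ← sum_Ico_sub f hmn, ← sum_neg_distrib]
    refine sum_congr rfl fun i hi => abs_of_nonpos (sub_nonpos.2 ?_)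
    have hi : m ≤ i := (mem_Ico.1 hi).1
    exact hanti (by simpa using hi) (by simp; omega) (by omega)
  rw [← sum_range_add_sum_Ico _ hmn, hup, hdown, two_nsmul]
  abel

theorem Nat.choose_monotoneOn (n : ℕ) : MonotoneOn n.choose (Set.Iic (n / 2)) :=
  monotoneOn_of_le_add_one Set.ordConnected_Iic fun _ _ _ hi =>
    Nat.choose_le_succ_of_lt_half_left (Nat.lt_of_succ_le hi)

theorem Nat.choose_antitoneOn (n : ℕ) : AntitoneOn n.choose (Set.Ici (n / 2)) := by
  refine antitoneOn_of_add_one_le Set.ordConnected_Ici fun i _ hi _ => ?_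
  have hi : n / 2 ≤ i := hi
  refine Nat.le_of_mul_le_mul_right ?_ (Nat.succ_pos i)
  calc n.choose (i + 1) * (i + 1) = n.choose i * (n - i) := Nat.choose_succ_right_eq n i
    _ ≤ n.choose i * (i + 1) := Nat.mul_le_mul_left _ (by omega)

theorem Nat.sum_range_abs_choose_succ_sub_choose (n : ℕ) :
    ∑ i ∈ range n, |(n.choose (i + 1) : ℝ) - n.choose i| = 2 * n.choose (n / 2) - 2 := by
  rw [sum_range_abs_sub_of_monotoneOn_of_antitoneOn (f := fun i => (n.choose i : ℝ))
    (Nat.div_le_self n 2) (Nat.mono_cast.comp_monotoneOn (Nat.choose_monotoneOn n))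
    (Nat.mono_cast.comp_antitoneOn (Nat.choose_antitoneOn n))]
  simp only [Nat.choose_zero_right, Nat.choose_self, Nat.cast_one, nsmul_eq_mul, Nat.cast_ofNat]
  ring

theorem Nat.centralBinom_sq_mul_le (m : ℕ) : m.centralBinom ^ 2 * (2 * m + 1) ≤ 16 ^ m := by
  induction m with
  | zero => simp
  | succ m ih =>
    have hrec := Nat.succ_mul_centralBinom_succ m
    have hstep : (2 * m + 1) * (2 * m + 3) ≤ 4 * (m + 1) ^ 2 := by nlinarith
    refine Nat.le_of_mul_le_mul_right (c := (m + 1) ^ 2) ?_ (by positivity)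
    calc (m + 1).centralBinom ^ 2 * (2 * (m + 1) + 1) * (m + 1) ^ 2
        = 4 * (m.centralBinom ^ 2 * (2 * m + 1)) * ((2 * m + 1) * (2 * m + 3)) := by
          rw [show (m + 1).centralBinom ^ 2 * (2 * (m + 1) + 1) * (m + 1) ^ 2
            = ((m + 1) * (m + 1).centralBinom) ^ 2 * (2 * m + 3) by ring, hrec]
          ring
      _ ≤ 4 * 16 ^ m * (4 * (m + 1) ^ 2) := by gcongr
      _ = 16 ^ (m + 1) * (m + 1) ^ 2 := by ring

theorem Nat.choose_half_sq_mul_le (n : ℕ) : n.choose (n / 2) ^ 2 * n ≤ 4 ^ n := by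
  obtain ⟨m, rfl | rfl⟩ := Nat.even_or_odd' n
  · rw [Nat.mul_div_cancel_left m two_pos, ← Nat.centralBinom_eq_two_mul_choose, pow_mul]
    calc m.centralBinom ^ 2 * (2 * m) ≤ m.centralBinom ^ 2 * (2 * m + 1) := by gcongr; omega
      _ ≤ (4 ^ 2) ^ m := Nat.centralBinom_sq_mul_le m
  · have hhalf : (2 * m + 1) / 2 = m := by omega
    have hcb : (m + 1).centralBinom = 2 * (2 * m + 1).choose m := by
      rw [Nat.centralBinom_eq_two_mul_choose, show 2 * (m + 1) = 2 * m + 1 + 1 by ring,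
        Nat.choose_succ_succ', Nat.choose_symm_half]
      ring
    have h := Nat.centralBinom_sq_mul_le (m + 1)
    rw [hcb] at h
    rw [hhalf]
    refine Nat.le_of_mul_le_mul_left (c := 4) ?_ four_pos
    calc 4 * ((2 * m + 1).choose m ^ 2 * (2 * m + 1))
        ≤ (2 * (2 * m + 1).choose m) ^ 2 * (2 * (m + 1) + 1) := by nlinarith
      _ ≤ 16 ^ (m + 1) := h
      _ = 4 * 4 ^ (2 * m + 1) := by rw [show 16 = 4 ^ 2 by norm_num, ← pow_mul]; ring

theorem Nat.choose_half_div_two_pow_le {n : ℕ} (hn : 0 < n) :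
    (n.choose (n / 2) : ℝ) / 2 ^ n ≤ 1 / √n := by
  rw [div_le_div_iff₀ (by positivity) (by positivity), one_mul]
  have h : ((n.choose (n / 2) : ℝ) * √n) ^ 2 ≤ (2 ^ n) ^ 2 := by
    rw [mul_pow, sq_sqrt n.cast_nonneg, ← pow_mul, mul_comm n 2, pow_mul]
    exact_mod_cast Nat.choose_half_sq_mul_le n
  exact (pow_le_pow_iff_left₀ (by positivity) (by positivity) two_ne_zero).1 h

theorem norm_sum_range_smul_le_of_norm_partial_sums_le {E : Type*} [SeminormedAddCommGroup E]
    [NormedSpace ℝ E] (w : ℕ → ℝ) (a : ℕ → E) (n : ℕ) {M : ℝ}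
    (hM : ∀ ℓ ≤ n, ‖∑ k ∈ range (ℓ + 1), a k‖ ≤ M) :
    ‖∑ h ∈ range (n + 1), w h • a h‖ ≤ (|w n| + ∑ i ∈ range n, |w (i + 1) - w i|) * M := by
  rw [sum_range_by_parts, Nat.add_sub_cancel, add_mul, sum_mul]
  refine (norm_sub_le _ _).trans (add_le_add ?_ (norm_sum_le_of_le _ fun i hi => ?_))
  · rw [norm_smul, Real.norm_eq_abs]
    exact mul_le_mul_of_nonneg_left (hM n le_rfl) (abs_nonneg _)
  · rw [norm_smul, Real.norm_eq_abs]
    exact mul_le_mul_of_nonneg_left (hM i (mem_range.1 hi).le) (abs_nonneg _)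

/-- inequality (2.33), a bound for Euler `(E,1)` means in terms of the
partial sums. -/
theorem euler_mean_le_max_partial_sums :
    ∃ C : ℝ, ∀ (a : ℕ → ℝ) (n : ℕ), 0 < n →
      |∑ h ∈ Finset.range (n + 1), (n.choose h : ℝ) / 2 ^ n * a h|
        ≤ C / Real.sqrt n *
            (Finset.range (n + 1)).sup' (Finset.nonempty_range_iff.mpr (Nat.succ_ne_zero n))
              (fun ℓ => |∑ k ∈ Finset.range (ℓ + 1), a k|) := by
  refine ⟨2, fun a n hn => ?_⟩
  set M := (range (n + 1)).sup' (nonempty_range_iff.mpr n.succ_ne_zero)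
    fun ℓ => |∑ k ∈ range (ℓ + 1), a k|
  have hM : ∀ ℓ ≤ n, |∑ k ∈ range (ℓ + 1), a k| ≤ M := fun ℓ hℓ =>
    le_sup' (fun ℓ => |∑ k ∈ range (ℓ + 1), a k|) (mem_range.2 (Nat.lt_succ_of_le hℓ))
  have hM0 : 0 ≤ M := (abs_nonneg _).trans (hM 0 n.zero_le)
  have hvariation : |(n.choose n : ℝ) / 2 ^ n|
      + ∑ i ∈ range n, |(n.choose (i + 1) : ℝ) / 2 ^ n - n.choose i / 2 ^ n|
        = (2 * n.choose (n / 2) - 1) / 2 ^ n := by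
    simp only [div_sub_div_same, abs_div, abs_of_pos (by positivity : (0 : ℝ) < 2 ^ n),
      ← sum_div, Nat.sum_range_abs_choose_succ_sub_choose, Nat.choose_self, Nat.cast_one,
      abs_one]
    ring
  calc |∑ h ∈ range (n + 1), (n.choose h : ℝ) / 2 ^ n * a h|
      ≤ (2 * n.choose (n / 2) - 1) / 2 ^ n * M := by
        rw [← hvariation]
        exact norm_sum_range_smul_le_of_norm_partial_sums_le (fun h => (n.choose h : ℝ) / 2 ^ n)
          a n hM
    _ ≤ 2 * ((n.choose (n / 2) : ℝ) / 2 ^ n) * M := by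
        rw [mul_div_assoc']
        gcongr
        exact sub_le_self _ zero_le_one
    _ ≤ 2 * (1 / √n) * M := by gcongr 2 * ?_ * M; exact Nat.choose_half_div_two_pow_le hn
    _ = 2 / √n * M := by ring
end

section
/- For every positive integer $D$: $\rho_0(D)=\prod_{p\mid D} p^{\lfloor v_p(D)/2\rfloor}$, and for every integer $k\ge 1$: $\rho_k(D)=\prod_{p\mid D,\ v_p(k)<v_p(D)/2}\big(2\,p^{v_p(k)}\big)\cdot\prod_{p\mid D,\ v_p(k)\ge v_p(D)/2} p^{\lfloor v_p(D)/2\rfloor}$, where the products run over the prime divisors $p$ of $D$. In particular, if $D$ is squarefree then $\rho_0(D)=1$. -/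
/-!
Counting residues `y` mod `D` with `y (y + k) ≡ 0` is multiplicative in `D` by the Chinese
remainder theorem, so it suffices to treat `D = p ^ e`. Let `a = v_p(k)`. Because
`min (v_p y) (v_p (y + k)) ≤ a`, when `2a < e` the condition `p ^ e ∣ y (y + k)` says that
`p ^ (e - a)` divides exactly one of `y`, `y + k`, which gives `2 p ^ a` solutions; when
`p ^ ⌈e/2⌉ ∣ k` (in particular for `k = 0`) it says `p ^ ⌈e/2⌉ ∣ y`, which gives `p ^ ⌊e/2⌋`.
-/

open Finset
open scoped Classical

/-- `ρ_k(D) = #{1 ≤ y ≤ D : D ∣ y² + k y}`. -/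
def rhok (k D : ℕ) : ℕ := ((Finset.Icc 1 D).filter (fun y => D ∣ y ^ 2 + k * y)).card

lemma card_filter_Icc_natCast (N : ℕ) [NeZero N] (P : ZMod N → Prop) [DecidablePred P] :
    ((Icc 1 N).filter fun y : ℕ => P y).card = #{z : ZMod N | P z} := by
  have hinj : Set.InjOn (fun y : ℕ => (y : ZMod N)) (Icc 1 N) := by
    intro a ha b hb hab
    simp only [coe_Icc, Set.mem_Icc] at ha hb
    exact ((ZMod.natCast_eq_natCast_iff a b N).1 hab).eq_of_abs_lt (by rw [abs_sub_lt_iff]; omega)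
  have himage : (Icc 1 N).image (fun y : ℕ => (y : ZMod N)) = univ :=
    eq_univ_of_card _ (by rw [card_image_of_injOn hinj, Nat.card_Icc, ZMod.card]; omega)
  rw [← card_image_of_injOn (hinj.mono (filter_subset _ _)), ← filter_image, himage]

lemma card_filter_Icc_dvd_add {c N : ℕ} [NeZero N] (hcN : c ∣ N) (r : ℕ) :
    #{y ∈ Icc 1 N | c ∣ y + r} = N / c := by
  have hval : ∀ y : ℕ, c ∣ y ↔ c ∣ (y : ZMod N).val := fun y => by
    rw [ZMod.val_natCast, Nat.dvd_mod_iff hcN]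
  calc #{y ∈ Icc 1 N | c ∣ y + r} = #{z : ZMod N | c ∣ (z + r).val} := by
        rw [← card_filter_Icc_natCast]
        exact congrArg card (filter_congr fun y _ => by rw [hval (y + r), Nat.cast_add])
    _ = #{z : ZMod N | c ∣ z.val} := card_equiv (Equiv.addRight (r : ZMod N)) fun z => by
        simp only [mem_filter, mem_univ, true_and, Equiv.coe_addRight]
    _ = #{y ∈ Icc 1 N | c ∣ y} := by
        rw [← card_filter_Icc_natCast]
        exact congrArg card (filter_congr fun y _ => (hval y).symm)
    _ = N / c := Nat.Ioc_filter_dvd_card_eq_div N c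

lemma card_filter_Icc_dvd {c N : ℕ} [NeZero N] (hcN : c ∣ N) :
    #{y ∈ Icc 1 N | c ∣ y} = N / c := by
  simpa using card_filter_Icc_dvd_add hcN 0

lemma rhok_eq_card_filter_dvd_mul (k D : ℕ) :
    rhok k D = #{y ∈ Icc 1 D | D ∣ y * (y + k)} := by
  simp_rw [rhok, show ∀ y, y ^ 2 + k * y = y * (y + k) from fun y => by ring]

lemma rhok_eq_card_zmod (k D : ℕ) [NeZero D] :
    rhok k D = #{z : ZMod D | z * (z + k) = 0} := by
  simp_rw [rhok_eq_card_filter_dvd_mul, ← ZMod.natCast_eq_zero_iff, Nat.cast_mul, Nat.cast_add]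
  exact card_filter_Icc_natCast D fun z => z * (z + k) = 0

lemma rhok_mul (k : ℕ) {m n : ℕ} (h : m.Coprime n) : rhok k (m * n) = rhok k m * rhok k n := by
  rcases eq_or_ne m 0 with rfl | hm
  · simp [rhok]
  rcases eq_or_ne n 0 with rfl | hn
  · simp [rhok]
  have : NeZero m := ⟨hm⟩
  have : NeZero n := ⟨hn⟩
  let e := ZMod.chineseRemainder h
  rw [rhok_eq_card_zmod, rhok_eq_card_zmod, rhok_eq_card_zmod, ← card_product]
  refine card_equiv e.toEquiv fun z => ?_
  simp only [mem_filter, mem_univ, true_and, mem_product, RingEquiv.toEquiv_eq_coe,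
    EquivLike.coe_coe]
  rw [← map_eq_zero_iff e e.injective, map_mul, map_add, map_natCast, Prod.ext_iff]
  simp

lemma rhok_one (k : ℕ) : rhok k 1 = 1 := by
  simp [rhok]

section PrimePower

variable {p e k y : ℕ}

lemma Nat.Prime.pow_dvd_mul_iff_le_factorization_add (hp : p.Prime) {m n : ℕ}
    (hm : m ≠ 0) (hn : n ≠ 0) : p ^ e ∣ m * n ↔ e ≤ m.factorization p + n.factorization p := by
  rw [hp.pow_dvd_iff_le_factorization (mul_ne_zero hm hn), Nat.factorization_mul hm hn]
  rfl

lemma pow_dvd_of_le_factorization {n a : ℕ} (h : a ≤ n.factorization p) : p ^ a ∣ n :=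
  (pow_dvd_pow p h).trans (Nat.ordProj_dvd n p)

lemma min_factorization_add_le (hp : p.Prime) (hk : k ≠ 0) :
    min (y.factorization p) ((y + k).factorization p) ≤ k.factorization p := by
  by_contra! h
  have hy := pow_dvd_of_le_factorization (p := p) (lt_min_iff.1 h).1
  have hyk := pow_dvd_of_le_factorization (p := p) (lt_min_iff.1 h).2
  exact Nat.pow_succ_factorization_not_dvd hk hp ((Nat.dvd_add_right hy).1 hyk)

lemma pow_dvd_mul_add_iff_of_two_mul_factorization_le (hp : p.Prime) (hy : y ≠ 0) (hk : k ≠ 0)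
    (he : 2 * k.factorization p ≤ e) :
    p ^ e ∣ y * (y + k) ↔
      p ^ (e - k.factorization p) ∣ y ∨ p ^ (e - k.factorization p) ∣ y + k := by
  set a := k.factorization p
  have hpk : p ^ a ∣ k := Nat.ordProj_dvd k p
  have hsplit : p ^ e = p ^ (e - a) * p ^ a := by rw [← pow_add]; congr 1; omega
  constructor
  · intro h
    have hsum := (hp.pow_dvd_mul_iff_le_factorization_add hy (by omega)).1 h
    have hmin := min_factorization_add_le (y := y) hp hk
    rcases le_total (y.factorization p) ((y + k).factorization p) with hle | hle
    · exact .inr (pow_dvd_of_le_factorization (by omega))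
    · exact .inl (pow_dvd_of_le_factorization (by omega))
  · rintro (h | h)
    · have hyk : p ^ a ∣ y + k := dvd_add ((pow_dvd_pow p (by omega)).trans h) hpk
      rw [hsplit]
      exact mul_dvd_mul h hyk
    · have hay : p ^ a ∣ y := (Nat.dvd_add_left hpk).1 ((pow_dvd_pow p (by omega)).trans h)
      rw [hsplit, mul_comm]
      exact mul_dvd_mul hay h

lemma pow_dvd_mul_add_iff_of_pow_dvd (hp : p.Prime) (hy : y ≠ 0) (hk : p ^ (e - e / 2) ∣ k) :
    p ^ e ∣ y * (y + k) ↔ p ^ (e - e / 2) ∣ y := by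
  constructor
  · intro h
    by_contra hndvd
    have hyk : ¬ p ^ (e - e / 2) ∣ y + k := fun h' => hndvd ((Nat.dvd_add_left hk).1 h')
    have hv := mt pow_dvd_of_le_factorization hndvd
    have hw := mt pow_dvd_of_le_factorization hyk
    have := (hp.pow_dvd_mul_iff_le_factorization_add hy (by omega)).1 h
    omega
  · intro h
    exact (pow_dvd_pow p (by omega)).trans (pow_add p _ _ ▸ mul_dvd_mul h (dvd_add h hk))

lemma rhok_prime_pow_of_pow_dvd (hp : p.Prime) (hk : p ^ (e - e / 2) ∣ k) :
    rhok k (p ^ e) = p ^ (e / 2) := by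
  have : NeZero (p ^ e) := ⟨pow_ne_zero e hp.ne_zero⟩
  rw [rhok_eq_card_filter_dvd_mul, filter_congr fun y hy =>
      pow_dvd_mul_add_iff_of_pow_dvd hp (Nat.one_le_iff_ne_zero.1 (mem_Icc.1 hy).1) hk,
    card_filter_Icc_dvd (pow_dvd_pow p (Nat.sub_le e _)), Nat.pow_div (Nat.sub_le e _) hp.pos]
  congr 1
  omega

lemma rhok_prime_pow_of_two_mul_factorization_lt (hp : p.Prime) (hk : k ≠ 0)
    (he : 2 * k.factorization p < e) :
    rhok k (p ^ e) = 2 * p ^ k.factorization p := by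
  set a := k.factorization p
  have : NeZero (p ^ e) := ⟨pow_ne_zero e hp.ne_zero⟩
  have hd : p ^ (e - a) ∣ p ^ e := pow_dvd_pow p (Nat.sub_le e a)
  have hdisj : Disjoint {y ∈ Icc 1 (p ^ e) | p ^ (e - a) ∣ y}
      {y ∈ Icc 1 (p ^ e) | p ^ (e - a) ∣ y + k} := by
    refine disjoint_filter.2 fun y _ hy hyk => ?_
    have := (hp.pow_dvd_iff_le_factorization hk).1 ((Nat.dvd_add_right hy).1 hyk)
    omega
  rw [rhok_eq_card_filter_dvd_mul, filter_congr fun y hy =>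
      pow_dvd_mul_add_iff_of_two_mul_factorization_le hp
        (Nat.one_le_iff_ne_zero.1 (mem_Icc.1 hy).1) hk he.le,
    filter_or, card_union_of_disjoint hdisj, card_filter_Icc_dvd hd, card_filter_Icc_dvd_add hd,
    Nat.pow_div (Nat.sub_le e a) hp.pos, Nat.sub_sub_self (by omega), two_mul]

lemma rhok_prime_pow (hp : p.Prime) (hk : k ≠ 0) :
    rhok k (p ^ e) =
      if 2 * k.factorization p < e then 2 * p ^ k.factorization p else p ^ (e / 2) := by
  split_ifs with he
  · exact rhok_prime_pow_of_two_mul_factorization_lt hp hk he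
  · exact rhok_prime_pow_of_pow_dvd hp (pow_dvd_of_le_factorization (by omega))

end PrimePower

/-- Proposition 2.16, the explicit value of `ρ_k(D)`. -/
theorem rhok_eq_prod (D : ℕ) (hD : 0 < D) :
    (rhok 0 D = ∏ p ∈ D.primeFactors, p ^ (D.factorization p / 2)) ∧
    (∀ k : ℕ, 1 ≤ k →
      rhok k D = ∏ p ∈ D.primeFactors,
        if (k.factorization p : ℝ) < (D.factorization p : ℝ) / 2
        then 2 * p ^ (k.factorization p)
        else p ^ (D.factorization p / 2)) ∧
    (Squarefree D → rhok 0 D = 1) := by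
  have hmul (k : ℕ) : rhok k D = ∏ p ∈ D.primeFactors, rhok k (p ^ D.factorization p) := by
    rw [Nat.multiplicative_factorization (rhok k) (fun _ _ => rhok_mul k) (rhok_one k) hD.ne',
      Nat.prod_factorization_eq_prod_primeFactors]
  have hzero : rhok 0 D = ∏ p ∈ D.primeFactors, p ^ (D.factorization p / 2) :=
    (hmul 0).trans <| prod_congr rfl fun p hp =>
      rhok_prime_pow_of_pow_dvd (Nat.prime_of_mem_primeFactors hp) (dvd_zero _)
  refine ⟨hzero, fun k hk => (hmul k).trans <| prod_congr rfl fun p hp => ?_, fun hsq => ?_⟩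
  · rw [rhok_prime_pow (Nat.prime_of_mem_primeFactors hp) (by omega)]
    refine if_congr ?_ rfl rfl
    rw [lt_div_iff₀ two_pos]
    norm_cast
    omega
  · rw [hzero]
    refine prod_eq_one fun p _ => ?_
    have hle := (Nat.squarefree_iff_factorization_le_one hD.ne').1 hsq p
    rw [Nat.div_eq_of_lt (by omega), pow_zero]
end

section
/- For every positive integer $D$ and every integer $k\ge 1$, $\rho_k(D)\le 2^{\omega(D)}\min(k,\sqrt D)$; and $\rho_0(D)\le \sqrt D$. -/
open Finset
open scoped Classical

/-- A product of prime powers with distinct prime bases divides `z` if each factor does. -/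
lemma prod_primepow_dvd {s : Finset ℕ} (hs : ∀ p ∈ s, p.Prime) (g : ℕ → ℕ) {z : ℕ}
    (h : ∀ p ∈ s, p ^ g p ∣ z) : (∏ p ∈ s, p ^ g p) ∣ z := by
  classical
  induction s using Finset.induction_on with
  | empty => exact one_dvd z
  | @insert a t ha ih =>
    rw [Finset.prod_insert ha]
    have hap : a.Prime := hs a (Finset.mem_insert_self a t)
    have hcop : Nat.Coprime (a ^ g a) (∏ p ∈ t, p ^ g p) := by
      apply Nat.Coprime.prod_right
      intro p hp
      have hpp : p.Prime := hs p (Finset.mem_insert_of_mem hp)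
      have : a ≠ p := by rintro rfl; exact ha hp
      exact Nat.Coprime.pow _ _ ((Nat.coprime_primes hap hpp).2 this)
    exact hcop.mul_dvd_of_dvd_of_dvd (h a (Finset.mem_insert_self a t))
      (ih (fun p hp => hs p (Finset.mem_insert_of_mem hp))
        (fun p hp => h p (Finset.mem_insert_of_mem hp)))

/-- Counting lemma: a subset of `[1, D]` whose elements are pairwise congruent mod `M`,
where `M * m = D`, has at most `m` elements. -/
lemma card_class_le {D M m : ℕ} (hMm : M * m = D) (hM : 0 < M) (T : Finset ℕ)
    (hT : ∀ y ∈ T, y ∈ Finset.Icc 1 D)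
    (hdvd : ∀ y1 ∈ T, ∀ y2 ∈ T, y2 ≤ y1 → M ∣ y1 - y2) : T.card ≤ m := by
  classical
  have hkey : ∀ y1 ∈ T, ∀ y2 ∈ T, y2 ≤ y1 → (y1 - 1) / M = (y2 - 1) / M → y1 = y2 := by
    intro y1 h1 y2 h2 hle heq
    obtain ⟨c, hc⟩ := hdvd y1 h1 y2 h2 hle
    have hy2 := hT y2 h2
    rw [Finset.mem_Icc] at hy2
    rcases Nat.eq_zero_or_pos c with rfl | hcpos
    · omega
    · exfalso
      have hMc : M ≤ M * c := Nat.le_mul_of_pos_right M hcpos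
      have h' : M ≤ y1 - y2 := hc ▸ hMc
      have hdivle : (y2 - 1 + M) / M ≤ (y1 - 1) / M := Nat.div_le_div_right (by omega)
      rw [Nat.add_div_right _ hM, heq] at hdivle
      omega
  have : T.card ≤ (Finset.range m).card := by
    apply Finset.card_le_card_of_injOn (fun y => (y - 1) / M)
    · intro y hy
      have := hT y hy
      rw [Finset.mem_Icc] at this
      rw [Finset.mem_coe, Finset.mem_range]
      apply Nat.div_lt_of_lt_mul
      omega
    · intro y1 h1 y2 h2 heq
      simp only at heq
      rcases le_total y2 y1 with hle | hle
      · exact hkey y1 h1 y2 h2 hle heq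
      · exact (hkey y2 h2 y1 h1 hle heq.symm).symm
  simpa using this

/-- Per-prime covering lemma. -/
lemma key_prime {p : ℕ} (hp : p.Prime) {e k y : ℕ} (hy : 0 < y) (hk : 0 < k)
    (hdvd : p ^ e ∣ y ^ 2 + k * y) :
    p ^ (e - min (e / 2) (k.factorization p)) ∣ y ∨
      p ^ (e - min (e / 2) (k.factorization p)) ∣ y + k := by
  have hyk : y ^ 2 + k * y = y * (y + k) := by ring
  set a := y.factorization p with ha
  set b := (y + k).factorization p with hb
  have hab : e ≤ a + b := by
    have h0 : y * (y + k) ≠ 0 := by positivity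
    have := (hp.pow_dvd_iff_le_factorization h0).1 (hyk ▸ hdvd)
    rwa [Nat.factorization_mul (by omega) (by omega), Finsupp.add_apply] at this
  have hmin : min a b ≤ k.factorization p := by
    by_contra hcon
    push_neg at hcon
    have h1 : p ^ min a b ∣ y :=
      dvd_trans (pow_dvd_pow p (min_le_left a b)) (Nat.ordProj_dvd y p)
    have h2 : p ^ min a b ∣ y + k :=
      dvd_trans (pow_dvd_pow p (min_le_right a b)) (Nat.ordProj_dvd (y + k) p)
    have h3 : p ^ min a b ∣ k := by
      have := Nat.dvd_sub h2 h1
      simpa using this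
    have := (hp.pow_dvd_iff_le_factorization hk.ne').1 h3
    omega
  rcases le_or_gt (e - min (e / 2) (k.factorization p)) a with h | h
  · exact Or.inl (dvd_trans (pow_dvd_pow p h) (Nat.ordProj_dvd y p))
  · refine Or.inr (dvd_trans (pow_dvd_pow p ?_) (Nat.ordProj_dvd (y + k) p))
    omega

lemma prod_pow_primeFactors_eq (D : ℕ) (hD : 0 < D) :
    ∏ p ∈ D.primeFactors, p ^ D.factorization p = D := by
  rw [← Nat.prod_factorization_eq_prod_primeFactors]
  exact Nat.factorization_prod_pow_eq_self hD.ne'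

/-- Main counting bound for `k ≥ 1`. -/
lemma rhok_le_master (D k : ℕ) (hD : 0 < D) (hk : 0 < k) :
    rhok k D ≤ 2 ^ D.primeFactors.card *
      ∏ p ∈ D.primeFactors, p ^ min (D.factorization p / 2) (k.factorization p) := by
  classical
  set v : ℕ → ℕ := fun p => min (D.factorization p / 2) (k.factorization p) with hv
  set f : ℕ → ℕ := fun p => D.factorization p - v p with hf
  set M := ∏ p ∈ D.primeFactors, p ^ f p with hM
  set m := ∏ p ∈ D.primeFactors, p ^ v p with hm
  have hprimes : ∀ p ∈ D.primeFactors, p.Prime := fun p hp => Nat.prime_of_mem_primeFactors hp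
  have hMm : M * m = D := by
    rw [hM, hm, ← Finset.prod_mul_distrib]
    rw [Finset.prod_congr rfl (fun p hp => ?_)]
    · exact prod_pow_primeFactors_eq D hD
    · rw [← pow_add]
      congr 1
      have : v p ≤ D.factorization p :=
        le_trans (min_le_left _ _) (Nat.div_le_self _ _)
      simp only [hf]
      omega
  have hMpos : 0 < M := by
    apply Finset.prod_pos
    intro p hp
    exact pow_pos (hprimes p hp).pos _
  set T := (Finset.Icc 1 D).filter (fun y => D ∣ y ^ 2 + k * y) with hT
  have hcover : ∀ y ∈ T, ∀ p ∈ D.primeFactors, p ^ f p ∣ y ∨ p ^ f p ∣ y + k := by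
    intro y hyT p hp
    rw [hT, Finset.mem_filter, Finset.mem_Icc] at hyT
    have hdvdD : p ^ D.factorization p ∣ y ^ 2 + k * y :=
      dvd_trans (Nat.ordProj_dvd D p) hyT.2
    exact key_prime (hprimes p hp) (by omega) hk hdvdD
  set Smap : ℕ → Finset ℕ := fun y => D.primeFactors.filter (fun p => ¬ p ^ f p ∣ y) with hS
  have hsub : T ⊆ D.primeFactors.powerset.biUnion (fun S => T.filter (fun y => Smap y = S)) := by
    intro y hy
    exact Finset.mem_biUnion.2 ⟨Smap y, Finset.mem_powerset.2 (Finset.filter_subset _ _),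
      Finset.mem_filter.2 ⟨hy, rfl⟩⟩
  have hclass : ∀ S ∈ D.primeFactors.powerset, (T.filter (fun y => Smap y = S)).card ≤ m := by
    intro S _
    apply card_class_le hMm hMpos
    · intro y hy
      exact (Finset.mem_filter.1 (Finset.mem_filter.1 hy).1).1
    · intro y1 h1 y2 h2 hle
      rw [Finset.mem_filter] at h1 h2
      apply prod_primepow_dvd hprimes
      intro p hp
      by_cases hpS : p ∈ S
      · have hd1 : p ^ f p ∣ y1 + k := by
          have : p ∈ Smap y1 := h1.2 ▸ hpS
          rw [hS] at this
          simp only [Finset.mem_filter] at this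
          rcases hcover y1 h1.1 p hp with h | h
          · exact absurd h this.2
          · exact h
        have hd2 : p ^ f p ∣ y2 + k := by
          have : p ∈ Smap y2 := h2.2 ▸ hpS
          rw [hS] at this
          simp only [Finset.mem_filter] at this
          rcases hcover y2 h2.1 p hp with h | h
          · exact absurd h this.2
          · exact h
        have := Nat.dvd_sub hd1 hd2
        simpa [Nat.add_sub_add_right] using this
      · have hd1 : p ^ f p ∣ y1 := by
          by_contra hcon
          exact hpS (h1.2 ▸ (by rw [hS]; exact Finset.mem_filter.2 ⟨hp, hcon⟩))
        have hd2 : p ^ f p ∣ y2 := by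
          by_contra hcon
          exact hpS (h2.2 ▸ (by rw [hS]; exact Finset.mem_filter.2 ⟨hp, hcon⟩))
        exact Nat.dvd_sub hd1 hd2
  calc rhok k D = T.card := rfl
    _ ≤ (D.primeFactors.powerset.biUnion (fun S => T.filter (fun y => Smap y = S))).card :=
        Finset.card_le_card hsub
    _ ≤ ∑ S ∈ D.primeFactors.powerset, (T.filter (fun y => Smap y = S)).card :=
        Finset.card_biUnion_le
    _ ≤ ∑ _S ∈ D.primeFactors.powerset, m := Finset.sum_le_sum hclass
    _ = 2 ^ D.primeFactors.card * m := by
        rw [Finset.sum_const, Finset.card_powerset, smul_eq_mul]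

/-- Bound for `k = 0`. -/
lemma rhok_zero_le (D : ℕ) (hD : 0 < D) :
    rhok 0 D ≤ ∏ p ∈ D.primeFactors, p ^ (D.factorization p / 2) := by
  classical
  set v : ℕ → ℕ := fun p => D.factorization p / 2 with hv
  set f : ℕ → ℕ := fun p => D.factorization p - v p with hf
  set M := ∏ p ∈ D.primeFactors, p ^ f p with hM
  set m := ∏ p ∈ D.primeFactors, p ^ v p with hm
  have hprimes : ∀ p ∈ D.primeFactors, p.Prime := fun p hp => Nat.prime_of_mem_primeFactors hp
  have hMm : M * m = D := by
    rw [hM, hm, ← Finset.prod_mul_distrib]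
    rw [Finset.prod_congr rfl (fun p hp => ?_)]
    · exact prod_pow_primeFactors_eq D hD
    · rw [← pow_add]
      congr 1
      have : v p ≤ D.factorization p := Nat.div_le_self _ _
      simp only [hf]
      omega
  have hMpos : 0 < M := by
    apply Finset.prod_pos
    intro p hp
    exact pow_pos (hprimes p hp).pos _
  set T := (Finset.Icc 1 D).filter (fun y => D ∣ y ^ 2 + 0 * y) with hT
  have hMdvd : ∀ y ∈ T, M ∣ y := by
    intro y hy
    rw [hT, Finset.mem_filter, Finset.mem_Icc] at hy
    have hysq : D ∣ y ^ 2 := by simpa using hy.2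
    apply prod_primepow_dvd hprimes
    intro p hp
    have hpp := hprimes p hp
    have hdvdp : p ^ D.factorization p ∣ y ^ 2 := dvd_trans (Nat.ordProj_dvd D p) hysq
    have hy0 : y ≠ 0 := by omega
    have h2 : (y ^ 2).factorization p = 2 * y.factorization p := by
      rw [Nat.factorization_pow]
      simp [mul_comm]
    have hle : D.factorization p ≤ 2 * y.factorization p :=
      h2 ▸ (hpp.pow_dvd_iff_le_factorization (pow_ne_zero 2 hy0)).1 hdvdp
    refine dvd_trans (pow_dvd_pow p ?_) (Nat.ordProj_dvd y p)
    simp only [hf, hv]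
    omega
  apply card_class_le hMm hMpos
  · intro y hy
    exact (Finset.mem_filter.1 hy).1
  · intro y1 h1 y2 h2 _
    exact Nat.dvd_sub (hMdvd y1 h1) (hMdvd y2 h2)

/-- Corollary 2.17, `ρ_k(D) ≤ 2^{ω(D)} min(k, √D)` and `ρ_0(D) ≤ √D`. -/
theorem rhok_le (D : ℕ) (hD : 0 < D) :
    (∀ k : ℕ, 1 ≤ k →
      (rhok k D : ℝ) ≤ 2 ^ D.primeFactors.card * min (k : ℝ) (Real.sqrt D)) ∧
    (rhok 0 D : ℝ) ≤ Real.sqrt D := by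
  have hprimes : ∀ p ∈ D.primeFactors, p.Prime := fun p hp => Nat.prime_of_mem_primeFactors hp
  have sqrt_bound : ∀ v : ℕ → ℕ, (∀ p ∈ D.primeFactors, 2 * v p ≤ D.factorization p) →
      ((∏ p ∈ D.primeFactors, p ^ v p : ℕ) : ℝ) ≤ Real.sqrt D := by
    intro v hvle
    set m := ∏ p ∈ D.primeFactors, p ^ v p with hm
    have hsq : m * m ∣ D := by
      rw [hm, ← Finset.prod_mul_distrib]
      calc (∏ p ∈ D.primeFactors, p ^ v p * p ^ v p) ∣
          ∏ p ∈ D.primeFactors, p ^ D.factorization p := by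
            apply Finset.prod_dvd_prod_of_dvd
            intro p hp
            rw [← pow_add]
            exact pow_dvd_pow p (by have := hvle p hp; omega)
        _ = D := prod_pow_primeFactors_eq D hD
    have hle : m * m ≤ D := Nat.le_of_dvd hD hsq
    apply Real.le_sqrt_of_sq_le
    have : ((m * m : ℕ) : ℝ) ≤ (D : ℝ) := Nat.cast_le.2 hle
    rw [Nat.cast_mul] at this
    nlinarith [this]
  constructor
  · intro k hk
    set v : ℕ → ℕ := fun p => min (D.factorization p / 2) (k.factorization p) with hv
    set m := ∏ p ∈ D.primeFactors, p ^ v p with hm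
    have hmain := rhok_le_master D k hD hk
    have hmk : m ≤ k := by
      have hdvd : m ∣ ∏ p ∈ D.primeFactors, p ^ k.factorization p := by
        apply Finset.prod_dvd_prod_of_dvd
        intro p _
        exact pow_dvd_pow p (min_le_right _ _)
      have hdvd2 : (∏ p ∈ D.primeFactors, p ^ k.factorization p) ∣ k :=
        prod_primepow_dvd hprimes _ (fun p _ => Nat.ordProj_dvd k p)
      exact Nat.le_of_dvd hk (hdvd.trans hdvd2)
    have hmsqrt : (m : ℝ) ≤ Real.sqrt D := by
      apply sqrt_bound
      intro p _
      have : v p ≤ D.factorization p / 2 := min_le_left _ _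
      omega
    have hmin : (m : ℝ) ≤ min (k : ℝ) (Real.sqrt D) :=
      le_min (by exact_mod_cast hmk) hmsqrt
    calc (rhok k D : ℝ) ≤ ((2 ^ D.primeFactors.card * m : ℕ) : ℝ) := Nat.cast_le.2 hmain
      _ = 2 ^ D.primeFactors.card * (m : ℝ) := by push_cast; ring
      _ ≤ 2 ^ D.primeFactors.card * min (k : ℝ) (Real.sqrt D) := by
          apply mul_le_mul_of_nonneg_left hmin
          positivity
  · have hmain := rhok_zero_le D hD
    have hmsqrt : ((∏ p ∈ D.primeFactors, p ^ (D.factorization p / 2) : ℕ) : ℝ) ≤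
        Real.sqrt D := by
      apply sqrt_bound
      intro p _
      omega
    calc (rhok 0 D : ℝ) ≤ _ := Nat.cast_le.2 hmain
      _ ≤ Real.sqrt D := hmsqrt
end
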